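/- arXiv:0805.1612 — 8 statements merged into one kernel-verified Lean document; each statement's English description precedes it below -/
import Mathlib

section
/- Suppose U_n ⊆ C^n[a,b] has a non-negative Bernstein basis p_{n,k}, f_0 ∈ U_n is strictly positive, f_1/f_0 is strictly increasing on [a,b], and an operator B_n f = Σ_{k=0}^n f(t_k) α_k p_{n,k} with t_k ∈ [a,b] and α_k > 0 satisfies B_n f_0 = f_0 and B_n f_1 = f_1, where f_0 = Σ β_k p_{n,k} and f_1 = Σ γ_k p_{n,k}. Then for each k: β_k > 0, f_0(t_k) α_k = β_k, f_1(t_k)/f_0(t_k) = γ_k/β_k, and f_1(a)/f_0(a) = γ_0/β_0 ≤ γ_k/β_k ≤ γ_n/β_n = f_1(b)/f_0(b). -/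
open Set Finset

lemma iteratedDeriv_linear_comb {n : ℕ} (p : Fin (n + 1) → ℝ → ℝ)
    (hsmooth : ∀ k, ContDiff ℝ n (p k)) (c : Fin (n + 1) → ℝ) :
    ∀ i ≤ n, ∀ x : ℝ,
      iteratedDeriv i (fun y => ∑ k, c k * p k y) x = ∑ k, c k * iteratedDeriv i (p k) x := by
  intro i
  induction i with
  | zero => intro _ x; simp
  | succ i ih =>
    intro hi x
    have hi' : i ≤ n := Nat.le_of_succ_le hi
    have hdiff : ∀ k : Fin (n + 1), Differentiable ℝ (iteratedDeriv i (p k)) := fun k =>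
      (hsmooth k).differentiable_iteratedDeriv i (by exact_mod_cast Nat.lt_of_succ_le hi)
    rw [iteratedDeriv_succ]
    have heq : deriv (iteratedDeriv i fun y => ∑ k, c k * p k y) x
        = deriv (fun y => ∑ k, c k * iteratedDeriv i (p k) y) x := by
      congr 1
      funext y
      exact ih hi' y
    rw [heq, deriv_fun_sum (fun k _ => ((hdiff k).differentiableAt).const_mul (c k))]
    refine Finset.sum_congr rfl fun k _ => ?_
    rw [deriv_const_mul _ ((hdiff k).differentiableAt), iteratedDeriv_succ]

lemma iter_zero {n : ℕ} {a b : ℝ} (hab : a < b) {g : ℝ → ℝ} (hg : ContDiff ℝ n g)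
    (h0 : ∀ x ∈ Icc a b, g x = 0) : ∀ i ≤ n, ∀ x ∈ Icc a b, iteratedDeriv i g x = 0 := by
  have hIoo : ∀ i ≤ n, ∀ x ∈ Ioo a b, iteratedDeriv i g x = 0 := by
    intro i
    induction i with
    | zero => intro _ x hx; simpa using h0 x (Ioo_subset_Icc_self hx)
    | succ i ih =>
      intro hi x hx
      rw [iteratedDeriv_succ]
      have : iteratedDeriv i g =ᶠ[nhds x] fun _ => (0 : ℝ) :=
        Filter.eventually_of_mem (Ioo_mem_nhds hx.1 hx.2) (ih (Nat.le_of_succ_le hi))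
      rw [this.deriv_eq, deriv_const]
  intro i hi x hx
  have hcont : Continuous (iteratedDeriv i g) :=
    hg.continuous_iteratedDeriv i (by exact_mod_cast hi)
  have heq : EqOn (iteratedDeriv i g) (fun _ => (0:ℝ)) (Ioo a b) := fun y hy => hIoo i hi y hy
  have : EqOn (iteratedDeriv i g) (fun _ => (0:ℝ)) (closure (Ioo a b)) :=
    heq.closure hcont continuous_const
  rw [closure_Ioo hab.ne] at this
  exact this hx

lemma coeff_unique {n : ℕ} {a b : ℝ} (hab : a < b) (p : Fin (n + 1) → ℝ → ℝ)
    (hsmooth : ∀ k, ContDiff ℝ n (p k))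
    (hza : ∀ k : Fin (n + 1), (∀ i < (k:ℕ), iteratedDeriv i (p k) a = 0) ∧
      iteratedDeriv k (p k) a ≠ 0)
    (c : Fin (n + 1) → ℝ) (hc : ∀ x ∈ Icc a b, (∑ k, c k * p k x) = 0) :
    ∀ k, c k = 0 := by
  have hg : ContDiff ℝ n (fun y => ∑ k, c k * p k y) := by
    apply ContDiff.sum
    intro k _
    exact (hsmooth k).const_smul (c k)
  have key : ∀ i : Fin (n + 1), (∑ k, c k * iteratedDeriv (i:ℕ) (p k) a) = 0 := by
    intro i
    rw [← iteratedDeriv_linear_comb p hsmooth c i (Nat.lt_succ_iff.mp i.isLt) a]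
    exact iter_zero hab hg hc i (Nat.lt_succ_iff.mp i.isLt) a ⟨le_refl a, hab.le⟩
  suffices h : ∀ m : ℕ, ∀ k : Fin (n + 1), (k : ℕ) = m → c k = 0 from fun k => h k k rfl
  intro m
  induction m using Nat.strongRecOn with
  | ind m ih =>
    intro k hk
    have h := key k
    have hsplit : ∀ j : Fin (n + 1), j ≠ k → c j * iteratedDeriv (k:ℕ) (p j) a = 0 := by
      intro j hj
      rcases lt_or_gt_of_ne (fun h => hj (Fin.ext h) : (j:ℕ) ≠ (k:ℕ)) with hlt | hgt
      · rw [ih (j:ℕ) (hk ▸ hlt) j rfl]; ring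
      · rw [(hza j).1 k hgt]; ring
    rw [Finset.sum_eq_single k (fun j _ hj => hsplit j hj) (by simp)] at h
    exact (mul_eq_zero.mp h).resolve_right (hza k).2


/-- `f` has a zero of order exactly `k` at `a`. -/
def ZeroOfOrder (f : ℝ → ℝ) (a : ℝ) (k : ℕ) : Prop :=
  (∀ i < k, iteratedDeriv i f a = 0) ∧ iteratedDeriv k f a ≠ 0

/-- Necessity part of Theorem ThmBern: if a Bernstein-type operator with nodes `t_k ∈ [a,b]`
and positive weights `α_k` fixes `f₀ > 0` and `f₁` with `f₁/f₀` strictly increasing, then the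
expansion coefficients satisfy `β_k > 0`, `f₀(t_k) α_k = β_k`, `f₁(t_k)/f₀(t_k) = γ_k/β_k`,
and `f₁(a)/f₀(a) = γ₀/β₀ ≤ γ_k/β_k ≤ γ_n/β_n = f₁(b)/f₀(b)`. -/
theorem bernstein_operator_necessary
    (n : ℕ) (a b : ℝ) (hab : a < b)
    (p : Fin (n + 1) → ℝ → ℝ)
    (hsmooth : ∀ k, ContDiff ℝ n (p k))
    (hza : ∀ k : Fin (n + 1), ZeroOfOrder (p k) a k)
    (hzb : ∀ k : Fin (n + 1), ZeroOfOrder (p k) b (n - (k : ℕ)))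
    (hnonneg : ∀ k, ∀ x ∈ Icc a b, 0 ≤ p k x)
    (f₀ f₁ : ℝ → ℝ) (β γ : Fin (n + 1) → ℝ)
    (hf₀ : ∀ x ∈ Icc a b, f₀ x = ∑ k, β k * p k x)
    (hf₁ : ∀ x ∈ Icc a b, f₁ x = ∑ k, γ k * p k x)
    (hf₀pos : ∀ x ∈ Icc a b, 0 < f₀ x)
    (hmono : StrictMonoOn (fun x => f₁ x / f₀ x) (Icc a b))
    (t : Fin (n + 1) → ℝ) (α : Fin (n + 1) → ℝ)
    (ht : ∀ k, t k ∈ Icc a b) (hα : ∀ k, 0 < α k)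
    (hB₀ : ∀ x ∈ Icc a b, (∑ k, f₀ (t k) * α k * p k x) = f₀ x)
    (hB₁ : ∀ x ∈ Icc a b, (∑ k, f₁ (t k) * α k * p k x) = f₁ x) :
    ∀ k, 0 < β k ∧ f₀ (t k) * α k = β k ∧
      f₁ (t k) / f₀ (t k) = γ k / β k ∧
      f₁ a / f₀ a = γ 0 / β 0 ∧
      γ 0 / β 0 ≤ γ k / β k ∧ γ k / β k ≤ γ (Fin.last n) / β (Fin.last n) ∧
      γ (Fin.last n) / β (Fin.last n) = f₁ b / f₀ b := by
  have ha : a ∈ Icc a b := ⟨le_rfl, hab.le⟩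
  have hb : b ∈ Icc a b := ⟨hab.le, le_rfl⟩
  -- coefficient identification
  have hβ : ∀ k, f₀ (t k) * α k = β k := by
    intro k
    have := coeff_unique hab p hsmooth hza (fun k => f₀ (t k) * α k - β k) (by
      intro x hx
      simp only [sub_mul, Finset.sum_sub_distrib]
      rw [hB₀ x hx, ← hf₀ x hx, sub_self]) k
    linarith
  have hγ : ∀ k, f₁ (t k) * α k = γ k := by
    intro k
    have := coeff_unique hab p hsmooth hza (fun k => f₁ (t k) * α k - γ k) (by
      intro x hx
      simp only [sub_mul, Finset.sum_sub_distrib]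
      rw [hB₁ x hx, ← hf₁ x hx, sub_self]) k
    linarith
  have hβpos : ∀ k, 0 < β k := fun k => (hβ k) ▸ mul_pos (hf₀pos _ (ht k)) (hα k)
  have hratio : ∀ k, f₁ (t k) / f₀ (t k) = γ k / β k := by
    intro k
    rw [← hβ k, ← hγ k, mul_div_mul_right _ _ (hα k).ne']
  -- value at a
  have pa0 : ∀ k : Fin (n + 1), k ≠ 0 → p k a = 0 := by
    intro k hk
    have : (0:ℕ) < (k:ℕ) := Nat.pos_of_ne_zero (fun h => hk (Fin.ext h))
    simpa using (hza k).1 0 this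
  have p0a : p 0 a ≠ 0 := by simpa using (hza (0 : Fin (n+1))).2
  have hf₀a : f₀ a = β 0 * p 0 a := by
    rw [hf₀ a ha]
    exact Finset.sum_eq_single 0 (fun j _ hj => by rw [pa0 j hj]; ring) (by simp)
  have hf₁a : f₁ a = γ 0 * p 0 a := by
    rw [hf₁ a ha]
    exact Finset.sum_eq_single 0 (fun j _ hj => by rw [pa0 j hj]; ring) (by simp)
  have hratioa : f₁ a / f₀ a = γ 0 / β 0 := by
    rw [hf₀a, hf₁a, mul_div_mul_right _ _ p0a]
  -- value at b
  have pb0 : ∀ k : Fin (n + 1), k ≠ Fin.last n → p k b = 0 := by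
    intro k hk
    have hkn : (k:ℕ) < n := lt_of_le_of_ne (Nat.lt_succ_iff.mp k.isLt)
      (fun h => hk (Fin.ext (by simpa using h)))
    have : (0:ℕ) < n - (k:ℕ) := Nat.sub_pos_of_lt hkn
    simpa using (hzb k).1 0 this
  have pnb : p (Fin.last n) b ≠ 0 := by
    have := (hzb (Fin.last n)).2
    simpa using this
  have hf₀b : f₀ b = β (Fin.last n) * p (Fin.last n) b := by
    rw [hf₀ b hb]
    exact Finset.sum_eq_single _ (fun j _ hj => by rw [pb0 j hj]; ring) (by simp)
  have hf₁b : f₁ b = γ (Fin.last n) * p (Fin.last n) b := by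
    rw [hf₁ b hb]
    exact Finset.sum_eq_single _ (fun j _ hj => by rw [pb0 j hj]; ring) (by simp)
  have hratiob : γ (Fin.last n) / β (Fin.last n) = f₁ b / f₀ b := by
    rw [hf₀b, hf₁b, mul_div_mul_right _ _ pnb]
  intro k
  refine ⟨hβpos k, hβ k, hratio k, hratioa, ?_, ?_, hratiob⟩
  · rw [← hratioa, ← hratio k]
    exact hmono.monotoneOn ha (ht k) (ht k).1
  · rw [hratiob, ← hratio k]
    exact hmono.monotoneOn (ht k) hb (ht k).2
end

section
/- Suppose U_n ⊆ C^n[a,b] has a non-negative Bernstein basis p_{n,k}, f_0 ∈ U_n is strictly positive, f_1/f_0 is strictly increasing on [a,b], and the expansion coefficients f_0 = Σ β_k p_{n,k}, f_1 = Σ γ_k p_{n,k} satisfy β_k > 0 and γ_0/β_0 ≤ γ_k/β_k ≤ γ_n/β_n for all k. Then there exist points t_0,...,t_n ∈ [a,b] and positive coefficients α_0,...,α_n such that the operator B_n f = Σ_{k=0}^n f(t_k) α_k p_{n,k} satisfies B_n f_0 = f_0 and B_n f_1 = f_1. -/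
open Set Finset

/-- Sufficiency part of Theorem ThmBern: if the expansion coefficients satisfy `β_k > 0` and
`γ₀/β₀ ≤ γ_k/β_k ≤ γ_n/β_n`, then there exist nodes `t_k ∈ [a,b]` and positive weights `α_k`
such that the operator `B_n f = Σ f(t_k) α_k p_{n,k}` fixes `f₀` and `f₁`. -/
theorem bernstein_operator_sufficient
    (n : ℕ) (a b : ℝ) (hab : a < b)
    (p : Fin (n + 1) → ℝ → ℝ)
    (hsmooth : ∀ k, ContDiff ℝ n (p k))
    (hza : ∀ k : Fin (n + 1), ZeroOfOrder (p k) a k)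
    (hzb : ∀ k : Fin (n + 1), ZeroOfOrder (p k) b (n - (k : ℕ)))
    (hnonneg : ∀ k, ∀ x ∈ Icc a b, 0 ≤ p k x)
    (f₀ f₁ : ℝ → ℝ) (β γ : Fin (n + 1) → ℝ)
    (hf₀ : ∀ x ∈ Icc a b, f₀ x = ∑ k, β k * p k x)
    (hf₁ : ∀ x ∈ Icc a b, f₁ x = ∑ k, γ k * p k x)
    (hf₀pos : ∀ x ∈ Icc a b, 0 < f₀ x)
    (hmono : StrictMonoOn (fun x => f₁ x / f₀ x) (Icc a b))
    (hcont : ContinuousOn (fun x => f₁ x / f₀ x) (Icc a b))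
    (hβ : ∀ k, 0 < β k)
    (hineq : ∀ k, γ 0 / β 0 ≤ γ k / β k ∧ γ k / β k ≤ γ (Fin.last n) / β (Fin.last n)) :
    ∃ (t : Fin (n + 1) → ℝ) (α : Fin (n + 1) → ℝ),
      (∀ k, t k ∈ Icc a b) ∧ (∀ k, 0 < α k) ∧
      (∀ x ∈ Icc a b, (∑ k, f₀ (t k) * α k * p k x) = f₀ x) ∧
      (∀ x ∈ Icc a b, (∑ k, f₁ (t k) * α k * p k x) = f₁ x) := by
  have ha : a ∈ Icc a b := ⟨le_refl a, hab.le⟩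
  have hb : b ∈ Icc a b := ⟨hab.le, le_refl b⟩
  -- vanishing at endpoints
  have hpa : ∀ k : Fin (n + 1), k ≠ 0 → p k a = 0 := by
    intro k hk
    have hkv : 0 < (k : ℕ) := by
      rcases Nat.eq_zero_or_pos (k : ℕ) with h | h
      · exact absurd (Fin.ext (by simp [h])) hk
      · exact h
    have := (hza k).1 0 hkv
    simpa [iteratedDeriv_zero] using this
  have hpb : ∀ k : Fin (n + 1), k ≠ Fin.last n → p k b = 0 := by
    intro k hk
    have hkv : 0 < n - (k : ℕ) := by
      have h1 : (k : ℕ) < n + 1 := k.isLt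
      have h2 : (k : ℕ) ≠ n := fun h => hk (Fin.ext (by simp [h]))
      omega
    have := (hzb k).1 0 hkv
    simpa [iteratedDeriv_zero] using this
  -- values at endpoints
  have hf₀a : f₀ a = β 0 * p 0 a := by
    rw [hf₀ a ha]
    exact Finset.sum_eq_single_of_mem 0 (Finset.mem_univ _)
      (fun k _ hk => by rw [hpa k hk, mul_zero])
  have hf₁a : f₁ a = γ 0 * p 0 a := by
    rw [hf₁ a ha]
    exact Finset.sum_eq_single_of_mem 0 (Finset.mem_univ _)
      (fun k _ hk => by rw [hpa k hk, mul_zero])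
  have hf₀b : f₀ b = β (Fin.last n) * p (Fin.last n) b := by
    rw [hf₀ b hb]
    exact Finset.sum_eq_single_of_mem _ (Finset.mem_univ _)
      (fun k _ hk => by rw [hpb k hk, mul_zero])
  have hf₁b : f₁ b = γ (Fin.last n) * p (Fin.last n) b := by
    rw [hf₁ b hb]
    exact Finset.sum_eq_single_of_mem _ (Finset.mem_univ _)
      (fun k _ hk => by rw [hpb k hk, mul_zero])
  have hp0a : p 0 a ≠ 0 := by
    intro h
    have := hf₀pos a ha
    rw [hf₀a, h, mul_zero] at this
    exact lt_irrefl 0 this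
  have hpnb : p (Fin.last n) b ≠ 0 := by
    intro h
    have := hf₀pos b hb
    rw [hf₀b, h, mul_zero] at this
    exact lt_irrefl 0 this
  have hga : f₁ a / f₀ a = γ 0 / β 0 := by
    rw [hf₁a, hf₀a, mul_div_mul_right _ _ hp0a]
  have hgb : f₁ b / f₀ b = γ (Fin.last n) / β (Fin.last n) := by
    rw [hf₁b, hf₀b, mul_div_mul_right _ _ hpnb]
  -- IVT to find nodes
  have hIVT : ∀ k : Fin (n + 1), ∃ s ∈ Icc a b, f₁ s / f₀ s = γ k / β k := by
    intro k
    have hmem : γ k / β k ∈ Icc ((fun x => f₁ x / f₀ x) a) ((fun x => f₁ x / f₀ x) b) := by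
      simp only [hga, hgb]
      exact ⟨(hineq k).1, (hineq k).2⟩
    obtain ⟨s, hs, hgs⟩ := intermediate_value_Icc hab.le hcont hmem
    exact ⟨s, hs, hgs⟩
  choose t ht hgt using hIVT
  refine ⟨t, fun k => β k / f₀ (t k), ht, ?_, ?_, ?_⟩
  · intro k
    exact div_pos (hβ k) (hf₀pos _ (ht k))
  · intro x hx
    rw [hf₀ x hx]
    refine Finset.sum_congr rfl fun k _ => ?_
    have h0 : f₀ (t k) ≠ 0 := (hf₀pos _ (ht k)).ne'
    field_simp
  · intro x hx
    rw [hf₁ x hx]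
    refine Finset.sum_congr rfl fun k _ => ?_
    have h0 : f₀ (t k) ≠ 0 := (hf₀pos _ (ht k)).ne'
    have hβ0 : β k ≠ 0 := (hβ k).ne'
    have := hgt k
    rw [div_eq_div_iff h0 hβ0] at this
    rw [mul_comm (f₁ (t k)), mul_assoc, div_mul_eq_mul_div, div_eq_iff h0]
    linear_combination p k x * this
end

section
/- Let U_n have a Bernstein basis p_{n,k} for {a,b}, let f_0 ∈ U_n be strictly positive, and suppose the space D_{f_0}U_n = {(f/f_0)' : f ∈ U_n} has a Bernstein basis q_{n-1,k}, k=0,...,n-1. Then for each k = 0,...,n there exist constants c_k and d_k (with c_0 = 0 and d_n = 0) such that (p_{n,k}/f_0)' = c_k q_{n-1,k-1} + d_k q_{n-1,k}, where for k ≥ 1, c_k = p_{n,k}^{(k)}(a) / (f_0(a) q_{n-1,k-1}^{(k-1)}(a)) ≠ 0, and for k ≤ n-1, d_k = p_{n,k}^{(n-k)}(b) / (f_0(b) q_{n-1,k}^{(n-1-k)}(b)) ≠ 0. -/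
open Set Finset

/-!
Write `(p_{n,k}/f₀)' = ∑ wᵢ q_{n-1,i}` on `[a,b]` and differentiate at `a`. Since `p_{n,k}` has
a zero of order `k` at `a` and `f₀(a) ≠ 0`, Leibniz' rule shows that `(p_{n,k}/f₀)'` has a zero of
order `k - 1` at `a` with `(k-1)`-st derivative `p_{n,k}^{(k)}(a)/f₀(a)`. Because `q_{n-1,i}` has a
zero of order exactly `i` at `a`, the matrix `(q_{n-1,i}^{(j)}(a))` is triangular with nonzero
diagonal, which forces `wᵢ = 0` for `i < k - 1` and determines `w_{k-1}`. The same argument at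
`b`, where the orders are reversed, kills `wᵢ` for `i > k` and determines `w_k`.
-/

section

variable {𝕜 : Type*} [NontriviallyNormedField 𝕜]

theorem iteratedDeriv_fun_mul_eq_of_forall_lt {f g : 𝕜 → 𝕜} {x : 𝕜} {k m : ℕ}
    (hf : ContDiffAt 𝕜 k f x) (hg : ContDiffAt 𝕜 k g x)
    (hfx : ∀ i < k, iteratedDeriv i f x = 0) (hm : m ≤ k) :
    iteratedDeriv m (fun y => f y * g y) x = iteratedDeriv m f x * g x := by
  rw [iteratedDeriv_fun_mul (hf.of_le (by exact_mod_cast hm)) (hg.of_le (by exact_mod_cast hm)),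
    sum_eq_single_of_mem m (self_mem_range_succ m)]
  · simp
  · intro i hi him
    rw [hfx i (by have := mem_range.1 hi; omega), mul_zero, zero_mul]

theorem iteratedDeriv_fun_div_eq_of_forall_lt {f g : 𝕜 → 𝕜} {x : 𝕜} {k m : ℕ}
    (hf : ContDiffAt 𝕜 k f x) (hg : ContDiffAt 𝕜 k g x) (hgx : g x ≠ 0)
    (hfx : ∀ i < k, iteratedDeriv i f x = 0) (hm : m ≤ k) :
    iteratedDeriv m (fun y => f y / g y) x = iteratedDeriv m f x / g x := by
  simp_rw [div_eq_mul_inv]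
  exact iteratedDeriv_fun_mul_eq_of_forall_lt hf (hg.inv hgx) hfx hm

theorem iteratedDeriv_eq_sum_of_eqOn {ι : Type*} {s : Set 𝕜} (hs : UniqueDiffOn 𝕜 s) {x : 𝕜}
    (hx : x ∈ s) {G : 𝕜 → 𝕜} {Q : ι → 𝕜 → 𝕜} {w : ι → 𝕜} {I : Finset ι} {m : ℕ}
    (hG : ContDiffAt 𝕜 m G x) (hQ : ∀ i ∈ I, ContDiffAt 𝕜 m (Q i) x)
    (hGQ : EqOn G (fun y => ∑ i ∈ I, w i * Q i y) s) :
    iteratedDeriv m G x = ∑ i ∈ I, w i * iteratedDeriv m (Q i) x := by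
  have hwQ : ∀ i ∈ I, ContDiffAt 𝕜 m (fun y => w i * Q i y) x :=
    fun i hi => contDiffAt_const.mul (hQ i hi)
  rw [← iteratedDerivWithin_eq_iteratedDeriv hs hG hx, iteratedDerivWithin_congr hGQ hx,
    iteratedDerivWithin_eq_iteratedDeriv hs (ContDiffAt.sum hwQ) hx, iteratedDeriv_fun_sum hwQ]
  exact sum_congr rfl fun i hi => iteratedDeriv_const_mul _ (hQ i hi)

end

-- At `k = 0` the index `k - 1` truncates to `0`; there `c = 0`, so only the `d` term survives.
theorem sum_range_mul_eq_add_of_eq_zero {n k : ℕ} (hk : k ≤ n) {w f : ℕ → ℝ} {c d : ℝ}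
    (hlow : ∀ i < k - 1, w i = 0) (hhigh : ∀ i < n, k < i → w i = 0)
    (hc : k ≠ 0 → w (k - 1) = c) (hc₀ : k = 0 → c = 0)
    (hd : k < n → w k = d) (hd₀ : k = n → d = 0) :
    ∑ i ∈ range n, w i * f i = c * f (k - 1) + d * f k := by
  have hterm : ∀ i ∈ range n, w i * f i =
      (if i = k - 1 then c * f (k - 1) else 0) + (if i = k then d * f k else 0) := by
    intro i hi
    have hin := mem_range.1 hi
    obtain h | ⟨rfl, h⟩ | rfl | h :
        i < k - 1 ∨ (i = k - 1 ∧ k ≠ 0) ∨ i = k ∨ k < i := by omega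
    · rw [hlow i h, if_neg (by omega), if_neg (by omega)]; ring
    · rw [hc h, if_pos rfl, if_neg (by omega)]; ring
    · rw [hd hin, if_pos rfl]
      split_ifs with h
      · rw [hc₀ (by omega)]; ring
      · ring
    · rw [hhigh i hin h, if_neg (by omega), if_neg (by omega)]; ring
  rw [sum_congr rfl hterm, sum_add_distrib, sum_ite_eq', sum_ite_eq']
  split_ifs with h₁ h₂ h₂
  · rfl
  · rw [hd₀ (by simp at h₂; omega)]; ring
  · rw [hc₀ (by simp at h₁; omega)]; ring
  · rw [hc₀ (by simp at h₁; omega), hd₀ (by simp at h₂; omega)]; ring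

theorem coeff_eq_of_iteratedDeriv_eq_sum {n t : ℕ} {x : ℝ} {G : ℝ → ℝ} {Q : ℕ → ℝ → ℝ}
    {w : ℕ → ℝ} (hQ : ∀ i < n, ZeroOfOrder (Q i) x i)
    (hG : ∀ j < n, iteratedDeriv j G x = ∑ i ∈ range n, w i * iteratedDeriv j (Q i) x)
    (ht : t < n) (hGt : ∀ j < t, iteratedDeriv j G x = 0) :
    (∀ i < t, w i = 0) ∧ w t = iteratedDeriv t G x / iteratedDeriv t (Q t) x := by
  have diag : ∀ j < n, (∀ i < j, w i = 0) →
      iteratedDeriv j G x = w j * iteratedDeriv j (Q j) x := by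
    intro j hj hw
    rw [hG j hj, sum_eq_single_of_mem j (mem_range.2 hj)]
    intro i hi hij
    rcases hij.lt_or_gt with h | h
    · rw [hw i h, zero_mul]
    · rw [(hQ i (mem_range.1 hi)).1 j h, mul_zero]
  have low : ∀ i < t, w i = 0 := by
    intro i
    induction i using Nat.strong_induction_on with
    | _ i ih =>
      intro hi
      have h := diag i (hi.trans ht) fun l hl => ih l hl (hl.trans hi)
      rw [hGt i hi, eq_comm, mul_eq_zero] at h
      exact h.resolve_right (hQ i (hi.trans ht)).2
  exact ⟨low, by rw [diag t ht low, mul_div_cancel_right₀ _ (hQ t ht).2]⟩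

theorem coeff_eq_of_deriv_div_eq_sum {n t : ℕ} {s : Set ℝ} (hs : UniqueDiffOn ℝ s) {x : ℝ}
    (hx : x ∈ s) {p f₀ : ℝ → ℝ} {Q : ℕ → ℝ → ℝ} {w : ℕ → ℝ}
    (hp : ContDiffAt ℝ n p x) (hf₀ : ContDiffAt ℝ n f₀ x) (hf₀x : f₀ x ≠ 0)
    (hQ : ∀ i < n, ContDiffAt ℝ (n - 1) (Q i) x) (hQx : ∀ i < n, ZeroOfOrder (Q i) x i)
    (hpx : ZeroOfOrder p x t) (ht₀ : t ≠ 0) (htn : t ≤ n)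
    (hw : EqOn (deriv fun y => p y / f₀ y) (fun y => ∑ i ∈ range n, w i * Q i y) s) :
    (∀ i < t - 1, w i = 0) ∧
      w (t - 1) = iteratedDeriv t p x / (f₀ x * iteratedDeriv (t - 1) (Q (t - 1)) x) := by
  have hcast : ((n - 1 : ℕ) : WithTop ℕ∞) = n - 1 := by norm_cast
  have hF : ∀ m ≤ t, iteratedDeriv m (fun y => p y / f₀ y) x = iteratedDeriv m p x / f₀ x :=
    fun m hm => iteratedDeriv_fun_div_eq_of_forall_lt (hp.of_le (by exact_mod_cast htn))
      (hf₀.of_le (by exact_mod_cast htn)) hf₀x hpx.1 hm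
  have hG : ContDiffAt ℝ (n - 1 : ℕ) (deriv fun y => p y / f₀ y) x :=
    (hp.div hf₀ hf₀x).derivWithin (by norm_cast; omega)
  have hsum : ∀ j < n, iteratedDeriv j (deriv fun y => p y / f₀ y) x =
      ∑ i ∈ range n, w i * iteratedDeriv j (Q i) x := fun j hj =>
    iteratedDeriv_eq_sum_of_eqOn hs hx (hG.of_le (by norm_cast; omega))
      (fun i hi => (hQ i (mem_range.1 hi)).of_le (by rw [← hcast]; norm_cast; omega)) hw
  have hvan : ∀ j < t - 1, iteratedDeriv j (deriv fun y => p y / f₀ y) x = 0 := by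
    intro j hj
    rw [← iteratedDeriv_succ', hF (j + 1) (by omega), hpx.1 (j + 1) (by omega), zero_div]
  obtain ⟨hlow, hval⟩ := coeff_eq_of_iteratedDeriv_eq_sum hQx hsum (by omega) hvan
  refine ⟨hlow, ?_⟩
  rw [hval, ← iteratedDeriv_succ', Nat.sub_add_cancel (Nat.one_le_iff_ne_zero.2 ht₀),
    hF t le_rfl, div_div]

theorem coeff_eq_of_deriv_div_eq_sum_rev {n k : ℕ} {s : Set ℝ} (hs : UniqueDiffOn ℝ s) {x : ℝ}
    (hx : x ∈ s) {p f₀ : ℝ → ℝ} {Q : ℕ → ℝ → ℝ} {w : ℕ → ℝ}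
    (hp : ContDiffAt ℝ n p x) (hf₀ : ContDiffAt ℝ n f₀ x) (hf₀x : f₀ x ≠ 0)
    (hQ : ∀ i < n, ContDiffAt ℝ (n - 1) (Q i) x)
    (hQx : ∀ i < n, ZeroOfOrder (Q i) x (n - 1 - i)) (hpx : ZeroOfOrder p x (n - k)) (hk : k < n)
    (hw : EqOn (deriv fun y => p y / f₀ y) (fun y => ∑ i ∈ range n, w i * Q i y) s) :
    (∀ i < n, k < i → w i = 0) ∧
      w k = iteratedDeriv (n - k) p x / (f₀ x * iteratedDeriv (n - 1 - k) (Q k) x) := by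
  have hrev : ∀ i < n, n - 1 - (n - 1 - i) = i := fun i hi => by omega
  have hw' : EqOn (deriv fun y => p y / f₀ y)
      (fun y => ∑ i ∈ range n, w (n - 1 - i) * Q (n - 1 - i) y) s := fun y hy => by
    rw [hw hy]
    exact (sum_range_reflect (fun i => w i * Q i y) n).symm
  obtain ⟨hhigh, hval⟩ := coeff_eq_of_deriv_div_eq_sum hs hx hp hf₀ hf₀x
    (fun i hi => hQ _ (by omega))
    (fun i hi => by simpa only [hrev i hi] using hQx (n - 1 - i) (by omega))
    hpx (by omega) (by omega) hw'
  refine ⟨fun i hi hki => hrev i hi ▸ hhigh (n - 1 - i) (by omega), ?_⟩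
  rwa [show n - k - 1 = n - 1 - k by omega, hrev k hk] at hval

/-- Proposition PropABL: with a Bernstein basis `p_{n,k}` of `U_n`, a strictly positive
`f₀ ∈ U_n`, and a Bernstein basis `q_{n-1,k}` of `D_{f₀}U_n`, there are constants `c_k, d_k`
(with `c_0 = 0`, `d_n = 0`) such that `(p_{n,k}/f₀)' = c_k q_{n-1,k-1} + d_k q_{n-1,k}`,
where for `k ≥ 1`, `c_k = p_{n,k}^{(k)}(a)/(f₀(a) q_{n-1,k-1}^{(k-1)}(a)) ≠ 0` and for
`k ≤ n-1`, `d_k = p_{n,k}^{(n-k)}(b)/(f₀(b) q_{n-1,k}^{(n-1-k)}(b)) ≠ 0`. -/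
theorem derivative_recursion_bernstein
    (n : ℕ) (hn : 1 ≤ n) (a b : ℝ) (hab : a < b)
    (p : ℕ → ℝ → ℝ) (q : ℕ → ℝ → ℝ) (f₀ : ℝ → ℝ)
    (hpsmooth : ∀ k ≤ n, ContDiff ℝ n (p k))
    (hqsmooth : ∀ k ≤ n - 1, ContDiff ℝ (n - 1) (q k))
    (hf₀smooth : ContDiff ℝ n f₀)
    (hpa : ∀ k ≤ n, ZeroOfOrder (p k) a k)
    (hpb : ∀ k ≤ n, ZeroOfOrder (p k) b (n - k))
    (hqa : ∀ k ≤ n - 1, ZeroOfOrder (q k) a k)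
    (hqb : ∀ k ≤ n - 1, ZeroOfOrder (q k) b (n - 1 - k))
    (hf₀pos : ∀ x ∈ Icc a b, 0 < f₀ x)
    -- `q_{n-1,0},…,q_{n-1,n-1}` is a basis of `D_{f₀}U_n`: each `(p_{n,k}/f₀)'`
    -- is a linear combination of the `q_{n-1,i}`
    (hD : ∀ k ≤ n, ∃ w : ℕ → ℝ, ∀ x ∈ Icc a b,
      deriv (fun y => p k y / f₀ y) x = ∑ i ∈ Finset.range n, w i * q i x) :
    ∃ c d : ℕ → ℝ, c 0 = 0 ∧ d n = 0 ∧
      (∀ k, 1 ≤ k → k ≤ n → c k ≠ 0 ∧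
        c k = iteratedDeriv k (p k) a / (f₀ a * iteratedDeriv (k - 1) (q (k - 1)) a)) ∧
      (∀ k ≤ n - 1, d k ≠ 0 ∧
        d k = iteratedDeriv (n - k) (p k) b / (f₀ b * iteratedDeriv (n - 1 - k) (q k) b)) ∧
      (∀ k ≤ n, ∀ x ∈ Icc a b,
        deriv (fun y => p k y / f₀ y) x = c k * q (k - 1) x + d k * q k x) := by
  have ha : a ∈ Icc a b := left_mem_Icc.2 hab.le
  have hb : b ∈ Icc a b := right_mem_Icc.2 hab.le
  have hf₀a : f₀ a ≠ 0 := (hf₀pos a ha).ne'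
  have hf₀b : f₀ b ≠ 0 := (hf₀pos b hb).ne'
  refine ⟨fun k => if k = 0 then 0 else
      iteratedDeriv k (p k) a / (f₀ a * iteratedDeriv (k - 1) (q (k - 1)) a),
    fun k => if k < n then
      iteratedDeriv (n - k) (p k) b / (f₀ b * iteratedDeriv (n - 1 - k) (q k) b) else 0,
    if_pos rfl, if_neg n.lt_irrefl, fun k hk₁ hkn => ?_, fun k hkn => ?_, fun k hkn x hx => ?_⟩
  · beta_reduce
    rw [if_neg (by omega)]
    exact ⟨div_ne_zero (hpa k hkn).2 (mul_ne_zero hf₀a (hqa _ (by omega)).2), rfl⟩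
  · beta_reduce
    rw [if_pos (by omega)]
    exact ⟨div_ne_zero (hpb k (by omega)).2 (mul_ne_zero hf₀b (hqb k hkn).2), rfl⟩
  obtain ⟨w, hw⟩ := hD k hkn
  have hq : ∀ i < n, ContDiff ℝ (n - 1) (q i) := fun i hi => hqsmooth i (by omega)
  have hcoeff_a := fun hk₀ => coeff_eq_of_deriv_div_eq_sum (uniqueDiffOn_Icc hab) ha
    (hpsmooth k hkn).contDiffAt hf₀smooth.contDiffAt hf₀a (fun i hi => (hq i hi).contDiffAt)
    (fun i hi => hqa i (by omega)) (hpa k hkn) hk₀ hkn hw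
  have hcoeff_b := fun hk => coeff_eq_of_deriv_div_eq_sum_rev (uniqueDiffOn_Icc hab) hb
    (hpsmooth k hkn).contDiffAt hf₀smooth.contDiffAt hf₀b (fun i hi => (hq i hi).contDiffAt)
    (fun i hi => hqb i (by omega)) (hpb k hkn) hk hw
  beta_reduce
  rw [hw x hx]
  exact sum_range_mul_eq_add_of_eq_zero hkn (fun i hi => (hcoeff_a (by omega)).1 i hi)
    (fun i hi hki => (hcoeff_b (by omega)).1 i hi hki)
    (fun hk₀ => (if_neg hk₀).symm ▸ (hcoeff_a hk₀).2) (fun hk₀ => if_pos hk₀)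
    (fun hk => (if_pos hk).symm ▸ (hcoeff_b hk).2) (fun hk => if_neg (by omega))
end

section
/- Under the hypotheses of the recursion (p_{n,k}/f_0)' = c_k q_{n-1,k-1} + d_k q_{n-1,k} with c_k ≠ 0 for k=1,...,n and d_k ≠ 0 for k=0,...,n-1, if f_0 = Σ_{k=0}^n β_k p_{n,k}, then β_0 = f_0(a)/p_{n,0}(a) and β_k = (-1)^k (d_0 ⋯ d_{k-1})/(c_1 ⋯ c_k) · f_0(a)/p_{n,0}(a) for k = 1,...,n. -/
open Set Finset

/-!
Dividing `f₀ = ∑ β_k p_{n,k}` by `f₀` gives `∑ β_k p_{n,k} / f₀ = 1` on `[a, b]`; differentiating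
and inserting the recursion, then collecting the coefficient of each `q_{n-1,j}`, yields
`∑_j (β_j d_j + β_{j+1} c_{j+1}) q_{n-1,j} = 0`. Linear independence of the `q_{n-1,j}` turns this
into the two-term recursion `β_{j+1} = -d_j β_j / c_{j+1}`, and `β₀` is read off at `x = a`, where
only `p_{n,0}` does not vanish.

The recursion only controls `(p_{n,k}/f₀)'`, not `f₀'`, and at the endpoints `f₀` is not pinned
down by its values on `[a, b]`. There `f₀` is differentiable because `f₀ = p / (p / f₀)` for
`p = p_{n,0}` at `a` and `p = p_{n,n}` at `b`, where `(p / f₀)' = d₀ q_{n-1,0}`, resp.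
`c_n q_{n-1,n-1}`, does not vanish.
-/

namespace ZeroOfOrder

variable {f : ℝ → ℝ} {a : ℝ} {k : ℕ}

theorem apply_ne_zero (h : ZeroOfOrder f a 0) : f a ≠ 0 := by
  simpa using h.2

theorem apply_eq_zero (h : ZeroOfOrder f a k) (hk : k ≠ 0) : f a = 0 := by
  simpa using h.1 0 (Nat.pos_of_ne_zero hk)

end ZeroOfOrder

section Calculus

variable {f g : ℝ → ℝ} {x : ℝ}

theorem differentiableAt_of_differentiableAt_div (hg : DifferentiableAt ℝ g x) (hgx : g x ≠ 0)
    (hfx : f x ≠ 0) (hdiv : DifferentiableAt ℝ (fun y => g y / f y) x) :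
    DifferentiableAt ℝ f x := by
  have hf : (fun y => g y / (g y / f y)) =ᶠ[nhds x] f := by
    filter_upwards [hg.continuousAt.eventually_ne hgx] with y hy
    rw [div_div_cancel₀ hy]
  exact (hg.div hdiv (div_ne_zero hgx hfx)).congr_of_eventuallyEq hf.symm

theorem differentiableAt_of_deriv_div_ne_zero (hg : DifferentiableAt ℝ g x) (hgx : g x ≠ 0)
    (hfx : f x ≠ 0) (hderiv : deriv (fun y => g y / f y) x ≠ 0) :
    DifferentiableAt ℝ f x :=
  differentiableAt_of_differentiableAt_div hg hgx hfx (differentiableAt_of_deriv_ne_zero hderiv)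

theorem differentiableAt_of_eqOn_Icc {a b : ℝ} (hg : Differentiable ℝ g)
    (hfg : EqOn f g (Icc a b)) (ha : DifferentiableAt ℝ f a) (hb : DifferentiableAt ℝ f b)
    (hx : x ∈ Icc a b) : DifferentiableAt ℝ f x := by
  rcases hx.1.eq_or_lt with rfl | hax
  · exact ha
  rcases hx.2.eq_or_lt with rfl | hxb
  · exact hb
  exact (hg x).congr_of_eventuallyEq (Filter.eventually_of_mem (Icc_mem_nhds hax hxb) hfg)

theorem deriv_eq_zero_of_eqOn_const {s : Set ℝ} {C : ℝ} (hs : UniqueDiffWithinAt ℝ s x)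
    (hx : x ∈ s) (hf : DifferentiableAt ℝ f x) (hfC : EqOn f (fun _ => C) s) : deriv f x = 0 :=
  hs.eq_deriv _ hf.hasDerivAt.hasDerivWithinAt
    ((hasDerivWithinAt_const x s C).congr hfC (hfC hx))

theorem sum_mul_deriv_div_eq_zero {s : Set ℝ} {N : ℕ} {p : ℕ → ℝ → ℝ} {β : ℕ → ℝ}
    (hs : UniqueDiffWithinAt ℝ s x) (hx : x ∈ s) (hp : ∀ k < N, DifferentiableAt ℝ (p k) x)
    (hf : DifferentiableAt ℝ f x) (hf_ne : ∀ y ∈ s, f y ≠ 0)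
    (hsum : ∀ y ∈ s, f y = ∑ k ∈ range N, β k * p k y) :
    ∑ k ∈ range N, β k * deriv (fun y => p k y / f y) x = 0 := by
  have hdiff : ∀ k ∈ range N, DifferentiableAt ℝ (fun y => β k * (p k y / f y)) x :=
    fun k hk => ((hp k (mem_range.mp hk)).div hf (hf_ne x hx)).const_mul _
  have hone : EqOn (fun y => ∑ k ∈ range N, β k * (p k y / f y)) (fun _ => 1) s := by
    intro y hy
    simp only [← mul_div_assoc, ← sum_div, ← hsum y hy, div_self (hf_ne y hy)]
  calc ∑ k ∈ range N, β k * deriv (fun y => p k y / f y) x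
      = deriv (fun y => ∑ k ∈ range N, β k * (p k y / f y)) x := by
        rw [deriv_fun_sum hdiff]
        exact sum_congr rfl fun k _ => (deriv_const_mul_field (v := fun y => p k y / f y) _).symm
    _ = 0 := deriv_eq_zero_of_eqOn_const hs hx (DifferentiableAt.fun_sum hdiff) hone

end Calculus

section

variable {R : Type*} [CommRing R]

theorem sum_range_succ_mul_shift_add {n : ℕ} (β c d Q : ℕ → R) (hc0 : c 0 = 0) (hdn : d n = 0) :
    ∑ k ∈ range (n + 1), β k * (c k * Q (k - 1) + d k * Q k) =
      ∑ j ∈ range n, (β j * d j + β (j + 1) * c (j + 1)) * Q j := by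
  have hsplit : ∀ k, β k * (c k * Q (k - 1) + d k * Q k) =
      β k * c k * Q (k - 1) + β k * d k * Q k := fun k => by ring
  rw [sum_congr rfl fun k _ => hsplit k, sum_add_distrib, sum_range_succ',
    sum_range_succ (fun k => β k * d k * Q k), hc0, hdn]
  simp only [mul_zero, zero_mul, add_zero, Nat.add_sub_cancel, ← sum_add_distrib]
  exact sum_congr rfl fun j _ => by ring

theorem eq_zero_of_forall_sum_mul_eq_zero {α : Type*} {s : Set α} {n : ℕ} {q : ℕ → α → R}
    (hq : LinearIndependent R (fun k : Fin n => s.domRestrict (q k))) {γ : ℕ → R}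
    (h : ∀ x ∈ s, ∑ j ∈ range n, γ j * q j x = 0) {j : ℕ} (hj : j < n) : γ j = 0 := by
  refine Fintype.linearIndependent_iff.mp hq (fun i => γ i) ?_ ⟨j, hj⟩
  funext x
  simp only [Finset.sum_apply, Pi.smul_apply, domRestrict_apply, smul_eq_mul, Pi.zero_apply,
    Fin.sum_univ_eq_sum_range (fun i => γ i * q i x)]
  exact h x x.2

end

theorem eq_neg_one_pow_mul_prod_div_prod {K : Type*} [Field K] {n : ℕ} {β c d : ℕ → K}
    (hc : ∀ k, 1 ≤ k → k ≤ n → c k ≠ 0)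
    (hrec : ∀ j < n, β j * d j + β (j + 1) * c (j + 1) = 0) {k : ℕ} (hk : k ≤ n) :
    β k = (-1) ^ k * (∏ i ∈ range k, d i) / (∏ i ∈ range k, c (i + 1)) * β 0 := by
  induction k with
  | zero => simp
  | succ k ih =>
    have hck : c (k + 1) ≠ 0 := hc (k + 1) (Nat.le_add_left 1 k) hk
    have hprod : ∏ i ∈ range k, c (i + 1) ≠ 0 :=
      prod_ne_zero_iff.mpr fun i hi => hc (i + 1) (Nat.le_add_left 1 i) (by grind)
    have hβ : β (k + 1) = -d k * β k / c (k + 1) := by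
      rw [eq_div_iff hck]
      linear_combination hrec k hk
    rw [hβ, ih (Nat.le_of_succ_le hk), prod_range_succ, prod_range_succ, pow_succ]
    field_simp

/-- Theorem ThmRep: given the recursion `(p_{n,k}/f₀)' = c_k q_{n-1,k-1} + d_k q_{n-1,k}`
with `c_k ≠ 0` for `k = 1,…,n` and `d_k ≠ 0` for `k = 0,…,n-1`, if
`f₀ = Σ β_k p_{n,k}`, then `β₀ = f₀(a)/p_{n,0}(a)` and
`β_k = (-1)^k (d₀⋯d_{k-1})/(c₁⋯c_k) · f₀(a)/p_{n,0}(a)` for `k = 1,…,n`. -/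
theorem representation_of_f0
    (n : ℕ) (hn : 1 ≤ n) (a b : ℝ) (hab : a < b)
    (p : ℕ → ℝ → ℝ) (q : ℕ → ℝ → ℝ) (f₀ : ℝ → ℝ) (β c d : ℕ → ℝ)
    (hpsmooth : ∀ k ≤ n, ContDiff ℝ n (p k))
    (hpa : ∀ k ≤ n, ZeroOfOrder (p k) a k)
    (hpb : ∀ k ≤ n, ZeroOfOrder (p k) b (n - k))
    (hqa : ∀ k ≤ n - 1, ZeroOfOrder (q k) a k)
    (hqb : ∀ k ≤ n - 1, ZeroOfOrder (q k) b (n - 1 - k))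
    (hqind : LinearIndependent ℝ (fun k : Fin n => (Icc a b).restrict (q (k : ℕ))))
    (hf₀pos : ∀ x ∈ Icc a b, 0 < f₀ x)
    (hc0 : c 0 = 0) (hdn : d n = 0)
    (hc : ∀ k, 1 ≤ k → k ≤ n → c k ≠ 0)
    (hd : ∀ k ≤ n - 1, d k ≠ 0)
    (hrec : ∀ k ≤ n, ∀ x ∈ Icc a b,
      deriv (fun y => p k y / f₀ y) x = c k * q (k - 1) x + d k * q k x)
    (hf₀ : ∀ x ∈ Icc a b, f₀ x = ∑ k ∈ Finset.range (n + 1), β k * p k x) :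
    β 0 = f₀ a / p 0 a ∧
    ∀ k, 1 ≤ k → k ≤ n →
      β k = (-1 : ℝ) ^ k * (∏ i ∈ Finset.range k, d i) / (∏ i ∈ Finset.range k, c (i + 1)) *
        (f₀ a / p 0 a) := by
  have haI : a ∈ Icc a b := left_mem_Icc.mpr hab.le
  have hbI : b ∈ Icc a b := right_mem_Icc.mpr hab.le
  have hf₀_ne : ∀ x ∈ Icc a b, f₀ x ≠ 0 := fun x hx => (hf₀pos x hx).ne'
  have hp : ∀ k ≤ n, Differentiable ℝ (p k) := fun k hk =>
    (hpsmooth k hk).differentiable (by exact_mod_cast Nat.one_le_iff_ne_zero.mp hn)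
  have hp0a : p 0 a ≠ 0 := (hpa 0 n.zero_le).apply_ne_zero
  have hf₀a : DifferentiableAt ℝ f₀ a := by
    refine differentiableAt_of_deriv_div_ne_zero (hp 0 n.zero_le a) hp0a (hf₀_ne a haI) ?_
    rw [hrec 0 n.zero_le a haI, hc0, zero_mul, zero_add]
    exact mul_ne_zero (hd 0 (Nat.zero_le _)) (hqa 0 (Nat.zero_le _)).apply_ne_zero
  have hf₀b : DifferentiableAt ℝ f₀ b := by
    have hpnb : ZeroOfOrder (p n) b 0 := by simpa using hpb n le_rfl
    have hqb' : ZeroOfOrder (q (n - 1)) b 0 := by simpa using hqb (n - 1) le_rfl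
    refine differentiableAt_of_deriv_div_ne_zero (hp n le_rfl b) hpnb.apply_ne_zero
      (hf₀_ne b hbI) ?_
    rw [hrec n le_rfl b hbI, hdn, zero_mul, add_zero]
    exact mul_ne_zero (hc n hn le_rfl) hqb'.apply_ne_zero
  have hf₀diff : ∀ x ∈ Icc a b, DifferentiableAt ℝ f₀ x := fun x hx =>
    differentiableAt_of_eqOn_Icc
      (Differentiable.fun_sum fun k hk => (hp k (by grind)).const_mul (β k)) hf₀ hf₀a hf₀b hx
  have hcoeff : ∀ x ∈ Icc a b,
      ∑ j ∈ range n, (β j * d j + β (j + 1) * c (j + 1)) * q j x = 0 := by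
    intro x hx
    rw [← sum_range_succ_mul_shift_add β c d (fun j => q j x) hc0 hdn,
      ← sum_mul_deriv_div_eq_zero (uniqueDiffOn_Icc hab x hx) hx
        (fun k hk => hp k (by omega) x) (hf₀diff x hx) hf₀_ne hf₀]
    exact sum_congr rfl fun k hk => by rw [hrec k (by grind) x hx]
  have hβ0 : β 0 = f₀ a / p 0 a := by
    rw [eq_div_iff hp0a, hf₀ a haI, sum_eq_single_of_mem 0 (by simp) fun k hk hk0 => by
      rw [(hpa k (by grind)).apply_eq_zero hk0, mul_zero]]
  refine ⟨hβ0, fun k _ hk => ?_⟩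
  rw [← hβ0]
  exact eq_neg_one_pow_mul_prod_div_prod hc
    (fun j hj => eq_zero_of_forall_sum_mul_eq_zero hqind hcoeff hj) hk
end

section
/- Assume U_n has a locally non-negative Bernstein basis p_{n,k} for {a,b}, f_0 ∈ U_n is strictly positive, and D_{f_0}U_n has a locally non-negative Bernstein basis q_{n-1,k}. Then the coefficients β_0,...,β_n in the expansion f_0 = Σ_{k=0}^n β_k p_{n,k} are all strictly positive. -/
/-!
Write `g k = p k / f₀` and expand `(g k)' = ∑ i, W k i * q i` in the basis of `D_{f₀}U_n`.
Since `g k` vanishes to order exactly `k` at `a` and `n - k` at `b`, comparing orders of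
vanishing forces `W k i = 0` unless `i ∈ {k - 1, k}`, and comparing the signs of leading
derivatives (positive at `a`, alternating at `b`, by local non-negativity) gives
`W (i + 1) i > 0 > W i i`. Differentiating `∑ k, β k * g k = 1` gives `∑ k, β k * W k i = 0`,
i.e. `β (i + 1) * W (i + 1) i = - β i * W i i`, so consecutive coefficients have the same sign;
finally `β 0 > 0` because `f₀ a = β 0 * p 0 a`.
-/

open Set Finset Filter Topology

section IteratedDeriv

variable {𝕜 : Type*} [NontriviallyNormedField 𝕜]

lemma iteratedDeriv_eq_of_eqOn {F : Type*} [NormedAddCommGroup F] [NormedSpace 𝕜 F]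
    {f g : 𝕜 → F} {s : Set 𝕜} {x : 𝕜} {n : ℕ} (hs : UniqueDiffOn 𝕜 s) (hx : x ∈ s)
    (hfg : EqOn f g s) (hf : ContDiffAt 𝕜 n f x) (hg : ContDiffAt 𝕜 n g x) :
    iteratedDeriv n f x = iteratedDeriv n g x := by
  rw [← iteratedDerivWithin_eq_iteratedDeriv hs hf hx,
    ← iteratedDerivWithin_eq_iteratedDeriv hs hg hx, iteratedDerivWithin_congr hfg hx]

lemma iteratedDeriv_succ_eq_sum_of_eqOn_deriv {ι : Type*} {I : Finset ι} {g : 𝕜 → 𝕜}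
    {q : ι → 𝕜 → 𝕜} {w : ι → 𝕜} {s : Set 𝕜} {x : 𝕜} {j : ℕ} (hs : UniqueDiffOn 𝕜 s)
    (hx : x ∈ s) (hg : ContDiffAt 𝕜 (j + 1) g x) (hq : ∀ i ∈ I, ContDiffAt 𝕜 j (q i) x)
    (hderiv : EqOn (deriv g) (fun y => ∑ i ∈ I, w i * q i y) s) :
    iteratedDeriv (j + 1) g x = ∑ i ∈ I, w i * iteratedDeriv j (q i) x := by
  have hsum : ∀ i ∈ I, ContDiffAt 𝕜 j (fun y => w i * q i y) x :=
    fun i hi => contDiffAt_const.mul (hq i hi)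
  rw [iteratedDeriv_succ', iteratedDeriv_eq_of_eqOn hs hx hderiv (hg.derivWithin le_rfl)
    (ContDiffAt.sum hsum), iteratedDeriv_fun_sum hsum]
  simp only [iteratedDeriv_const_mul_field]

lemma iteratedDeriv_mul_of_forall_lt {u v : 𝕜 → 𝕜} {x : 𝕜} {k : ℕ}
    (hu : ContDiffAt 𝕜 k u x) (hv : ContDiffAt 𝕜 k v x)
    (h : ∀ i < k, iteratedDeriv i u x = 0) :
    iteratedDeriv k (fun y => u y * v y) x = iteratedDeriv k u x * v x := by
  rw [iteratedDeriv_fun_mul hu hv, Finset.sum_range_succ,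
    Finset.sum_eq_zero fun i hi => by rw [h i (mem_range.mp hi)]; simp]
  simp

lemma iteratedDeriv_div_of_forall_lt {u v : 𝕜 → 𝕜} {x : 𝕜} {k : ℕ}
    (hu : ContDiffAt 𝕜 k u x) (hv : ContDiffAt 𝕜 k v x) (hvx : v x ≠ 0)
    (h : ∀ i < k, iteratedDeriv i u x = 0) {i : ℕ} (hi : i ≤ k) :
    iteratedDeriv i (fun y => u y / v y) x = iteratedDeriv i u x / v x := by
  simp only [div_eq_mul_inv]
  exact iteratedDeriv_mul_of_forall_lt (hu.of_le (by exact_mod_cast hi))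
    ((hv.inv hvx).of_le (by exact_mod_cast hi)) fun j hj => h j (hj.trans_le hi)

end IteratedDeriv

lemma taylorWithinEval_univ_of_forall_lt {f : ℝ → ℝ} {k : ℕ} {a : ℝ}
    (h : ∀ i < k, iteratedDeriv i f a = 0) (x : ℝ) :
    taylorWithinEval f k univ a x = iteratedDeriv k f a / k.factorial * (x - a) ^ k := by
  rw [taylor_within_apply, Finset.sum_range_succ, Finset.sum_eq_zero fun i hi => by
    simp [h i (mem_range.mp hi)]]
  simp only [iteratedDerivWithin_univ, smul_eq_mul, zero_add]
  ring

lemma iteratedDeriv_nonneg_of_eventually_nonneg {f : ℝ → ℝ} {k : ℕ} {a : ℝ}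
    (hf : ContDiff ℝ k f) (h : ∀ i < k, iteratedDeriv i f a = 0)
    (hnonneg : ∀ᶠ x in 𝓝[>] a, 0 ≤ f x) : 0 ≤ iteratedDeriv k f a := by
  have hlim : Tendsto (fun x => f x / (x - a) ^ k) (𝓝[>] a)
      (𝓝 (iteratedDeriv k f a / k.factorial)) := by
    have := ((Real.taylor_tendsto convex_univ (mem_univ a) hf.contDiffOn).mono_left
      (nhdsWithin_mono a (subset_univ (Ioi a)))).add_const (iteratedDeriv k f a / k.factorial)
    rw [zero_add] at this
    refine this.congr' (eventually_nhdsWithin_of_forall fun x hx => ?_)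
    have : (x - a) ^ k ≠ 0 := pow_ne_zero _ (sub_ne_zero.mpr (ne_of_gt hx))
    rw [taylorWithinEval_univ_of_forall_lt h]
    field_simp
    ring
  have hquot : ∀ᶠ x in 𝓝[>] a, 0 ≤ f x / (x - a) ^ k := by
    filter_upwards [hnonneg, self_mem_nhdsWithin] with x hfx hx
    exact div_nonneg hfx (pow_nonneg (sub_nonneg.mpr (le_of_lt hx)) k)
  have := mul_nonneg (ge_of_tendsto hlim hquot) (Nat.cast_nonneg k.factorial)
  rwa [div_mul_cancel₀ _ (by positivity)] at this

lemma neg_one_pow_mul_iteratedDeriv_nonneg_of_eventually_nonneg {f : ℝ → ℝ} {k : ℕ} {b : ℝ}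
    (hf : ContDiff ℝ k f) (h : ∀ i < k, iteratedDeriv i f b = 0)
    (hnonneg : ∀ᶠ x in 𝓝[<] b, 0 ≤ f x) : 0 ≤ (-1) ^ k * iteratedDeriv k f b := by
  have hreflect : ∀ i, iteratedDeriv i (fun x => f (-x)) (-b) = (-1) ^ i * iteratedDeriv i f b :=
    fun i => by rw [iteratedDeriv_comp_neg, neg_neg, smul_eq_mul]
  rw [← hreflect]
  exact iteratedDeriv_nonneg_of_eventually_nonneg (hf.comp contDiff_neg)
    (fun i hi => by rw [hreflect, h i hi, mul_zero]) (tendsto_neg_nhdsGT_neg.eventually hnonneg)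

namespace ZeroOfOrder

variable {f : ℝ → ℝ} {k : ℕ}

lemma iteratedDeriv_pos {a : ℝ} (h : ZeroOfOrder f a k) (hf : ContDiff ℝ k f)
    (hnonneg : ∀ᶠ x in 𝓝[>] a, 0 ≤ f x) : 0 < iteratedDeriv k f a :=
  (iteratedDeriv_nonneg_of_eventually_nonneg hf h.1 hnonneg).lt_of_ne' h.2

lemma neg_one_pow_mul_iteratedDeriv_pos {b : ℝ} (h : ZeroOfOrder f b k) (hf : ContDiff ℝ k f)
    (hnonneg : ∀ᶠ x in 𝓝[<] b, 0 ≤ f x) : 0 < (-1) ^ k * iteratedDeriv k f b :=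
  (neg_one_pow_mul_iteratedDeriv_nonneg_of_eventually_nonneg hf h.1 hnonneg).lt_of_ne'
    (mul_ne_zero (pow_ne_zero _ (by norm_num)) h.2)

end ZeroOfOrder

section Expansion

variable {ι : Type*} {I : Finset ι} {q : ι → ℝ → ℝ} {x₀ : ℝ} {ord : ι → ℕ} {w : ι → ℝ}

lemma sum_mul_iteratedDeriv_eq_single (hord : InjOn ord I)
    (hq : ∀ i ∈ I, ∀ j < ord i, iteratedDeriv j (q i) x₀ = 0) {i₀ : ι} (hi₀ : i₀ ∈ I)
    (hw : ∀ i ∈ I, ord i < ord i₀ → w i = 0) :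
    ∑ i ∈ I, w i * iteratedDeriv (ord i₀) (q i) x₀ = w i₀ * iteratedDeriv (ord i₀) (q i₀) x₀ := by
  refine Finset.sum_eq_single_of_mem i₀ hi₀ fun i hi hne => ?_
  rcases lt_trichotomy (ord i) (ord i₀) with hlt | heq | hgt
  · rw [hw i hi hlt, zero_mul]
  · exact absurd (hord hi hi₀ heq) hne
  · rw [hq i hi _ hgt, mul_zero]

lemma eq_zero_of_sum_mul_iteratedDeriv_eq_zero (hord : InjOn ord I)
    (hq : ∀ i ∈ I, ZeroOfOrder (q i) x₀ (ord i)) {t : ℕ}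
    (hsum : ∀ j < t, ∑ i ∈ I, w i * iteratedDeriv j (q i) x₀ = 0) :
    ∀ i ∈ I, ord i < t → w i = 0 := by
  intro i hi hit
  induction hm : ord i using Nat.strong_induction_on generalizing i with
  | _ m ih =>
    subst hm
    have hi0 := hsum _ hit
    rw [sum_mul_iteratedDeriv_eq_single hord (fun i hi => (hq i hi).1) hi
      fun i' hi' hlt => ih _ hlt i' hi' (hlt.trans hit) rfl] at hi0
    exact (mul_eq_zero.mp hi0).resolve_right (hq i hi).2

lemma eq_zero_and_iteratedDeriv_succ_eq_of_sum (hord : InjOn ord I)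
    (hq : ∀ i ∈ I, ZeroOfOrder (q i) x₀ (ord i)) {g : ℝ → ℝ} {i₀ : ι} (hi₀ : i₀ ∈ I)
    (hderiv : ∀ j ≤ ord i₀,
      iteratedDeriv (j + 1) g x₀ = ∑ i ∈ I, w i * iteratedDeriv j (q i) x₀)
    (hg : ∀ j < ord i₀, iteratedDeriv (j + 1) g x₀ = 0) :
    (∀ i ∈ I, ord i < ord i₀ → w i = 0) ∧
      iteratedDeriv (ord i₀ + 1) g x₀ = w i₀ * iteratedDeriv (ord i₀) (q i₀) x₀ := by
  have hw := eq_zero_of_sum_mul_iteratedDeriv_eq_zero hord hq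
    fun j hj => (hderiv j hj.le).symm.trans (hg j hj)
  exact ⟨hw, (hderiv _ le_rfl).trans
    (sum_mul_iteratedDeriv_eq_single hord (fun i hi => (hq i hi).1) hi₀ hw)⟩

end Expansion

structure IsLocallyNonnegBernsteinFamily (n : ℕ) (a b : ℝ) (p : ℕ → ℝ → ℝ) : Prop where
  contDiff : ∀ k ≤ n, ContDiff ℝ n (p k)
  zeroOfOrder_left : ∀ k ≤ n, ZeroOfOrder (p k) a k
  zeroOfOrder_right : ∀ k ≤ n, ZeroOfOrder (p k) b (n - k)
  nonneg : ∃ δ > 0, ∀ k ≤ n, ∀ x ∈ Ico a (a + δ) ∪ Ioc (b - δ) b, 0 ≤ p k x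

namespace IsLocallyNonnegBernsteinFamily

variable {n k : ℕ} {a b : ℝ} {p : ℕ → ℝ → ℝ}

lemma iteratedDeriv_pos_left (hp : IsLocallyNonnegBernsteinFamily n a b p) (hk : k ≤ n) :
    0 < iteratedDeriv k (p k) a := by
  obtain ⟨δ, hδ, hnonneg⟩ := hp.nonneg
  refine (hp.zeroOfOrder_left k hk).iteratedDeriv_pos
    ((hp.contDiff k hk).of_le (by exact_mod_cast hk)) ?_
  filter_upwards [Ioo_mem_nhdsGT (lt_add_of_pos_right a hδ)] with x hx
  exact hnonneg k hk x (Or.inl (Ioo_subset_Ico_self hx))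

lemma neg_one_pow_mul_iteratedDeriv_pos_right (hp : IsLocallyNonnegBernsteinFamily n a b p)
    (hk : k ≤ n) : 0 < (-1) ^ (n - k) * iteratedDeriv (n - k) (p k) b := by
  obtain ⟨δ, hδ, hnonneg⟩ := hp.nonneg
  refine (hp.zeroOfOrder_right k hk).neg_one_pow_mul_iteratedDeriv_pos
    ((hp.contDiff k hk).of_le (by exact_mod_cast Nat.sub_le n k)) ?_
  filter_upwards [Ioo_mem_nhdsLT (sub_lt_self b hδ)] with x hx
  exact hnonneg k hk x (Or.inr (Ioo_subset_Ioc_self hx))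

lemma coeff_zero_pos (hp : IsLocallyNonnegBernsteinFamily n a b p) {f₀ : ℝ → ℝ} {β : ℕ → ℝ}
    (hf₀ : f₀ a = ∑ k ∈ range (n + 1), β k * p k a) (hf₀a : 0 < f₀ a) : 0 < β 0 := by
  have hp0 : 0 < p 0 a := by simpa using hp.iteratedDeriv_pos_left (Nat.zero_le n)
  rw [Finset.sum_eq_single_of_mem 0 (by simp) fun k hk hk0 => by
    simpa using Or.inr ((hp.zeroOfOrder_left k (by simp at hk; omega)).1 0 (by omega))] at hf₀
  exact pos_of_mul_pos_left (hf₀ ▸ hf₀a) hp0.le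

lemma iteratedDeriv_succ_eq_sum (hp : IsLocallyNonnegBernsteinFamily (n - 1) a b p)
    {s : Set ℝ} (hs : UniqueDiffOn ℝ s) {x : ℝ} (hx : x ∈ s) {g : ℝ → ℝ}
    (hg : ContDiffAt ℝ n g x) {w : ℕ → ℝ}
    (hderiv : EqOn (deriv g) (fun y => ∑ i ∈ range n, w i * p i y) s) {j : ℕ} (hj : j < n) :
    iteratedDeriv (j + 1) g x = ∑ i ∈ range n, w i * iteratedDeriv j (p i) x :=
  iteratedDeriv_succ_eq_sum_of_eqOn_deriv hs hx (hg.of_le (by exact_mod_cast hj))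
    (fun i hi => ((hp.contDiff i (by simp at hi; omega)).contDiffAt).of_le
      (by exact_mod_cast (by omega : j ≤ n - 1))) hderiv

end IsLocallyNonnegBernsteinFamily

structure IsSignedBidiagonal (n : ℕ) (W : ℕ → ℕ → ℝ) : Prop where
  eq_zero : ∀ k ≤ n, ∀ i < n, k ≠ i → k ≠ i + 1 → W k i = 0
  subdiag_pos : ∀ i < n, 0 < W (i + 1) i
  diag_neg : ∀ i < n, W i i < 0

lemma IsSignedBidiagonal.pos_of_sum_mul_eq_zero {n : ℕ} {W : ℕ → ℕ → ℝ}
    (hW : IsSignedBidiagonal n W) {β : ℕ → ℝ} (hβ₀ : 0 < β 0)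
    (hsum : ∀ i < n, ∑ k ∈ range (n + 1), β k * W k i = 0) : ∀ k ≤ n, 0 < β k := by
  intro k hk
  induction k with
  | zero => exact hβ₀
  | succ i ih =>
    have hi : i < n := by omega
    have hpair := hsum i hi
    rw [Finset.sum_eq_add_of_mem i (i + 1) (mem_range.2 (by omega)) (mem_range.2 (by omega))
      (by omega) fun k hk hne => by
        rw [hW.eq_zero k (by simp at hk; omega) i hi hne.1 hne.2, mul_zero]] at hpair
    have hprod : 0 < β (i + 1) * W (i + 1) i := by
      linarith [mul_neg_of_pos_of_neg (ih (by omega)) (hW.diag_neg i hi)]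
    exact pos_of_mul_pos_left hprod (hW.subdiag_pos i hi).le

section Quotient

variable {n : ℕ} {a b : ℝ} {p q : ℕ → ℝ → ℝ} {f₀ : ℝ → ℝ}

lemma eq_zero_and_pos_of_deriv_div_eq_sum (hp : IsLocallyNonnegBernsteinFamily n a b p)
    (hq : IsLocallyNonnegBernsteinFamily (n - 1) a b q) (hab : a < b) (hf₀ : ContDiff ℝ n f₀)
    (hf₀a : 0 < f₀ a) {m : ℕ} (hm : m < n) {w : ℕ → ℝ}
    (hderiv : EqOn (deriv fun y => p (m + 1) y / f₀ y) (fun y => ∑ i ∈ range n, w i * q i y)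
      (Icc a b)) :
    (∀ i < m, w i = 0) ∧ 0 < w m := by
  have hp' := hp.zeroOfOrder_left (m + 1) hm
  have hquot : ∀ i ≤ m + 1, iteratedDeriv i (fun y => p (m + 1) y / f₀ y) a =
      iteratedDeriv i (p (m + 1)) a / f₀ a := fun i hi =>
    iteratedDeriv_div_of_forall_lt ((hp.contDiff _ hm).contDiffAt.of_le (by exact_mod_cast hm))
      (hf₀.contDiffAt.of_le (by exact_mod_cast hm)) hf₀a.ne' hp'.1 hi
  obtain ⟨hzero, hlead⟩ := eq_zero_and_iteratedDeriv_succ_eq_of_sum (I := range n)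
    (ord := fun i => i) (g := fun y => p (m + 1) y / f₀ y) (fun _ _ _ _ h => h)
    (fun i hi => hq.zeroOfOrder_left i (by simp at hi; omega)) (i₀ := m) (mem_range.2 hm)
    (fun j hj => hq.iteratedDeriv_succ_eq_sum (uniqueDiffOn_Icc hab) (left_mem_Icc.2 hab.le)
      ((hp.contDiff _ hm).contDiffAt.div hf₀.contDiffAt hf₀a.ne') hderiv (by omega))
    (fun j hj => by rw [hquot (j + 1) (by omega), hp'.1 (j + 1) (by omega), zero_div])
  refine ⟨fun i hi => hzero i (mem_range.2 (hi.trans hm)) hi, ?_⟩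
  have hpos : 0 < w m * iteratedDeriv m (q m) a := by
    rw [← hlead]
    exact hquot (m + 1) le_rfl ▸ div_pos (hp.iteratedDeriv_pos_left hm) hf₀a
  exact pos_of_mul_pos_left hpos (hq.iteratedDeriv_pos_left (by omega)).le

lemma eq_zero_and_neg_of_deriv_div_eq_sum (hp : IsLocallyNonnegBernsteinFamily n a b p)
    (hq : IsLocallyNonnegBernsteinFamily (n - 1) a b q) (hab : a < b) (hf₀ : ContDiff ℝ n f₀)
    (hf₀b : 0 < f₀ b) {k : ℕ} (hk : k < n) {w : ℕ → ℝ}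
    (hderiv : EqOn (deriv fun y => p k y / f₀ y) (fun y => ∑ i ∈ range n, w i * q i y)
      (Icc a b)) :
    (∀ i < n, k < i → w i = 0) ∧ w k < 0 := by
  have hp' := hp.zeroOfOrder_right k hk.le
  have hquot : ∀ i ≤ n - k, iteratedDeriv i (fun y => p k y / f₀ y) b =
      iteratedDeriv i (p k) b / f₀ b := fun i hi =>
    iteratedDeriv_div_of_forall_lt
      ((hp.contDiff _ hk.le).contDiffAt.of_le (by exact_mod_cast Nat.sub_le n k))
      (hf₀.contDiffAt.of_le (by exact_mod_cast Nat.sub_le n k)) hf₀b.ne' hp'.1 hi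
  obtain ⟨hzero, hlead⟩ := eq_zero_and_iteratedDeriv_succ_eq_of_sum (I := range n)
    (ord := fun i => n - 1 - i) (g := fun y => p k y / f₀ y)
    (fun i hi j hj hij => by simp at hi hj hij; omega)
    (fun i hi => hq.zeroOfOrder_right i (by simp at hi; omega)) (i₀ := k) (mem_range.2 hk)
    (fun j hj => hq.iteratedDeriv_succ_eq_sum (uniqueDiffOn_Icc hab) (right_mem_Icc.2 hab.le)
      ((hp.contDiff _ hk.le).contDiffAt.div hf₀.contDiffAt hf₀b.ne') hderiv (by omega))
    (fun j hj => by rw [hquot (j + 1) (by omega), hp'.1 (j + 1) (by omega), zero_div])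
  refine ⟨fun i hi hki => hzero i (mem_range.2 hi) (by omega), ?_⟩
  rw [show n - 1 - k + 1 = n - k by omega, hquot _ le_rfl, div_eq_iff hf₀b.ne'] at hlead
  have hpb := hp.neg_one_pow_mul_iteratedDeriv_pos_right hk.le
  have hqb := hq.neg_one_pow_mul_iteratedDeriv_pos_right (k := k) (by omega)
  have hsign : (-1 : ℝ) ^ (n - k) = -(-1) ^ (n - 1 - k) := by
    rw [show n - k = n - 1 - k + 1 by omega, pow_succ, mul_neg_one]
  rw [hsign, hlead] at hpb
  have hprod : 0 < -w k * ((-1) ^ (n - 1 - k) * iteratedDeriv (n - 1 - k) (q k) b) * f₀ b := by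
    convert hpb using 1
    ring
  linarith [pos_of_mul_pos_left (pos_of_mul_pos_left hprod hf₀b.le) hqb.le]

lemma isSignedBidiagonal_of_deriv_div_eq_sum (hp : IsLocallyNonnegBernsteinFamily n a b p)
    (hq : IsLocallyNonnegBernsteinFamily (n - 1) a b q) (hab : a < b) (hf₀ : ContDiff ℝ n f₀)
    (hf₀a : 0 < f₀ a) (hf₀b : 0 < f₀ b) {W : ℕ → ℕ → ℝ}
    (hW : ∀ k ≤ n, EqOn (deriv fun y => p k y / f₀ y) (fun y => ∑ i ∈ range n, W k i * q i y)
      (Icc a b)) :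
    IsSignedBidiagonal n W := by
  have hleft := fun m (hm : m < n) =>
    eq_zero_and_pos_of_deriv_div_eq_sum hp hq hab hf₀ hf₀a hm (hW (m + 1) hm)
  have hright := fun k (hk : k < n) =>
    eq_zero_and_neg_of_deriv_div_eq_sum hp hq hab hf₀ hf₀b hk (hW k hk.le)
  refine ⟨fun k hk i hi hki hki₁ => ?_, fun i hi => (hleft i hi).2, fun i hi => (hright i hi).2⟩
  rcases lt_or_gt_of_ne hki with hlt | hgt
  · exact (hright k (hlt.trans hi)).1 i hi hlt
  · obtain ⟨m, rfl⟩ : ∃ m, k = m + 1 := ⟨k - 1, by omega⟩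
    exact (hleft m (by omega)).1 i (by omega)

lemma sum_mul_coeff_eq_zero (hq : IsLocallyNonnegBernsteinFamily (n - 1) a b q) (hab : a < b)
    (hp : ∀ k ≤ n, ContDiff ℝ n (p k)) (hf₀ : ContDiff ℝ n f₀)
    (hf₀pos : ∀ x ∈ Icc a b, 0 < f₀ x) {W : ℕ → ℕ → ℝ}
    (hW : ∀ k ≤ n, EqOn (deriv fun y => p k y / f₀ y) (fun y => ∑ i ∈ range n, W k i * q i y)
      (Icc a b))
    {β : ℕ → ℝ} (hβ : ∀ x ∈ Icc a b, f₀ x = ∑ k ∈ range (n + 1), β k * p k x) :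
    ∀ i < n, ∑ k ∈ range (n + 1), β k * W k i = 0 := by
  have ha : a ∈ Icc a b := left_mem_Icc.2 hab.le
  have hg : ∀ k ∈ range (n + 1), ContDiffAt ℝ n (fun y => p k y / f₀ y) a := fun k hk =>
    (hp k (by simp at hk; omega)).contDiffAt.div hf₀.contDiffAt (hf₀pos a ha).ne'
  have hone : EqOn (fun y => ∑ k ∈ range (n + 1), β k * (p k y / f₀ y)) (fun _ => 1) (Icc a b) :=
    fun x hx => by
      simp only [← mul_div_assoc, ← Finset.sum_div, ← hβ x hx, div_self (hf₀pos x hx).ne']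
  refine fun i hi => eq_zero_of_sum_mul_iteratedDeriv_eq_zero (I := range n) (ord := fun i => i)
    (w := fun i => ∑ k ∈ range (n + 1), β k * W k i) (fun _ _ _ _ h => h)
    (fun i hi => hq.zeroOfOrder_left i (by simp at hi; omega)) (t := n) (fun j hj => ?_) i
    (mem_range.2 hi) hi
  calc ∑ i ∈ range n, (∑ k ∈ range (n + 1), β k * W k i) * iteratedDeriv j (q i) a
      = ∑ k ∈ range (n + 1), β k * ∑ i ∈ range n, W k i * iteratedDeriv j (q i) a := by
        simp only [Finset.sum_mul, Finset.mul_sum, mul_assoc]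
        exact Finset.sum_comm
    _ = ∑ k ∈ range (n + 1), β k * iteratedDeriv (j + 1) (fun y => p k y / f₀ y) a :=
        Finset.sum_congr rfl fun k hk => by
          rw [hq.iteratedDeriv_succ_eq_sum (uniqueDiffOn_Icc hab) ha (hg k hk)
            (hW k (by simp at hk; omega)) hj]
    _ = iteratedDeriv (j + 1) (fun y => ∑ k ∈ range (n + 1), β k * (p k y / f₀ y)) a := by
        rw [iteratedDeriv_fun_sum fun k hk => contDiffAt_const.mul
          ((hg k hk).of_le (by exact_mod_cast hj))]
        simp only [iteratedDeriv_const_mul_field]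
    _ = iteratedDeriv (j + 1) (fun _ => (1 : ℝ)) a :=
        iteratedDeriv_eq_of_eqOn (uniqueDiffOn_Icc hab) ha hone
          (ContDiffAt.sum fun k hk => contDiffAt_const.mul ((hg k hk).of_le
            (by exact_mod_cast hj))) contDiffAt_const
    _ = 0 := by simp [iteratedDeriv_const]

end Quotient

theorem normalization_property_general
    (n : ℕ) (a b : ℝ) (hab : a < b)
    (p : ℕ → ℝ → ℝ) (q : ℕ → ℝ → ℝ) (f₀ : ℝ → ℝ) (β : ℕ → ℝ)
    (hpsmooth : ∀ k ≤ n, ContDiff ℝ n (p k))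
    (hqsmooth : ∀ k ≤ n - 1, ContDiff ℝ (n - 1) (q k))
    (hf₀smooth : ContDiff ℝ n f₀)
    (hpa : ∀ k ≤ n, ZeroOfOrder (p k) a k)
    (hpb : ∀ k ≤ n, ZeroOfOrder (p k) b (n - k))
    (hqa : ∀ k ≤ n - 1, ZeroOfOrder (q k) a k)
    (hqb : ∀ k ≤ n - 1, ZeroOfOrder (q k) b (n - 1 - k))
    -- local non-negativity of both bases at `{a,b}`
    (hploc : ∃ δ > 0, ∀ k ≤ n, ∀ x ∈ Ico a (a + δ) ∪ Ioc (b - δ) b, 0 ≤ p k x)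
    (hqloc : ∃ δ > 0, ∀ k ≤ n - 1, ∀ x ∈ Ico a (a + δ) ∪ Ioc (b - δ) b, 0 ≤ q k x)
    (hf₀pos : ∀ x ∈ Icc a b, 0 < f₀ x)
    -- `q_{n-1,k}` is a basis of `D_{f₀}U_n`
    (hD : ∀ k ≤ n, ∃ w : ℕ → ℝ, ∀ x ∈ Icc a b,
      deriv (fun y => p k y / f₀ y) x = ∑ i ∈ Finset.range n, w i * q i x)
    (hf₀ : ∀ x ∈ Icc a b, f₀ x = ∑ k ∈ Finset.range (n + 1), β k * p k x) :
    ∀ k ≤ n, 0 < β k := by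
  have hp : IsLocallyNonnegBernsteinFamily n a b p := ⟨hpsmooth, hpa, hpb, hploc⟩
  have hq : IsLocallyNonnegBernsteinFamily (n - 1) a b q :=
    ⟨fun k hk => by exact_mod_cast hqsmooth k hk, hqa, hqb, hqloc⟩
  choose! W hW using hD
  have ha : a ∈ Icc a b := left_mem_Icc.2 hab.le
  have hb : b ∈ Icc a b := right_mem_Icc.2 hab.le
  exact (isSignedBidiagonal_of_deriv_div_eq_sum hp hq hab hf₀smooth (hf₀pos a ha) (hf₀pos b hb)
    hW).pos_of_sum_mul_eq_zero (hp.coeff_zero_pos (hf₀ a ha) (hf₀pos a ha))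
    (sum_mul_coeff_eq_zero hq hab hpsmooth hf₀smooth hf₀pos hW hf₀)

/-- Theorem Thm7 (normalization property): if `U_n` has a locally non-negative Bernstein basis
`p_{n,k}`, `f₀ ∈ U_n` is strictly positive, and `D_{f₀}U_n` has a locally non-negative
Bernstein basis `q_{n-1,k}`, then the coefficients in `f₀ = Σ β_k p_{n,k}` are positive. -/
theorem normalization_property
    (n : ℕ) (hn : 1 ≤ n) (a b : ℝ) (hab : a < b)
    (p : ℕ → ℝ → ℝ) (q : ℕ → ℝ → ℝ) (f₀ : ℝ → ℝ) (β : ℕ → ℝ)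
    (hpsmooth : ∀ k ≤ n, ContDiff ℝ n (p k))
    (hqsmooth : ∀ k ≤ n - 1, ContDiff ℝ (n - 1) (q k))
    (hf₀smooth : ContDiff ℝ n f₀)
    (hpa : ∀ k ≤ n, ZeroOfOrder (p k) a k)
    (hpb : ∀ k ≤ n, ZeroOfOrder (p k) b (n - k))
    (hqa : ∀ k ≤ n - 1, ZeroOfOrder (q k) a k)
    (hqb : ∀ k ≤ n - 1, ZeroOfOrder (q k) b (n - 1 - k))
    -- local non-negativity of both bases at `{a,b}`
    (hploc : ∃ δ > 0, ∀ k ≤ n, ∀ x ∈ Ico a (a + δ) ∪ Ioc (b - δ) b, 0 ≤ p k x)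
    (hqloc : ∃ δ > 0, ∀ k ≤ n - 1, ∀ x ∈ Ico a (a + δ) ∪ Ioc (b - δ) b, 0 ≤ q k x)
    (hf₀pos : ∀ x ∈ Icc a b, 0 < f₀ x)
    -- `q_{n-1,k}` is a basis of `D_{f₀}U_n`
    (hD : ∀ k ≤ n, ∃ w : ℕ → ℝ, ∀ x ∈ Icc a b,
      deriv (fun y => p k y / f₀ y) x = ∑ i ∈ Finset.range n, w i * q i x)
    (hf₀ : ∀ x ∈ Icc a b, f₀ x = ∑ k ∈ Finset.range (n + 1), β k * p k x) :
    ∀ k ≤ n, 0 < β k :=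
  normalization_property_general n a b hab p q f₀ β hpsmooth hqsmooth hf₀smooth hpa hpb hqa hqb
    hploc hqloc hf₀pos hD hf₀
end

section
/- For 0 < b < 2π with b ≠ π (so 1 - cos b ≠ 0), the functions p_{2,2}(x) = 1 - cos x, p_{2,1}(x) = sin x - (sin b/(1-cos b))(1-cos x), and p_{2,0}(x) = 1 - cos(x-b) form a Bernstein basis for span{1, cos x, sin x} on {0, b}: p_{2,k} has a zero of order exactly k at 0 and exactly 2-k at b. Moreover p_{2,1}'(b) = -1 < 0 and p_{2,1}'(0) = 1 > 0, so this basis is locally non-negative at {0,b}. -/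
open Set Real

/-!
Every function involved is a trigonometric polynomial `a + p cos x + q sin x`, a class closed
under differentiation, so all orders of vanishing come down to evaluating such expressions at
`0` and `b`. The only non-local fact is the non-negativity of `p_{2,1}` on `[0, b]`, which
follows from the half-angle factorisation
`p_{2,1}(x) = 2 sin (x/2) sin ((b - x)/2) / sin (b/2)`.
-/

section ZeroOfOrder

variable {f : ℝ → ℝ} {a : ℝ}

theorem zeroOfOrder_zero_iff : ZeroOfOrder f a 0 ↔ f a ≠ 0 := by
  simp [ZeroOfOrder]

theorem zeroOfOrder_one_iff : ZeroOfOrder f a 1 ↔ f a = 0 ∧ deriv f a ≠ 0 := by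
  simp [ZeroOfOrder]

theorem zeroOfOrder_two_iff :
    ZeroOfOrder f a 2 ↔ f a = 0 ∧ deriv f a = 0 ∧ deriv (deriv f) a ≠ 0 := by
  simp [ZeroOfOrder, Nat.le_one_iff_eq_zero_or_eq_one, or_imp, forall_and, iteratedDeriv_succ,
    and_assoc]

end ZeroOfOrder

noncomputable def trigPoly (a p q : ℝ) : ℝ → ℝ := fun x => a + p * cos x + q * sin x

theorem trigPoly_mem_span (a p q : ℝ) :
    trigPoly a p q ∈ Submodule.span ℝ ({fun _ => (1 : ℝ), cos, sin} : Set (ℝ → ℝ)) := by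
  have hfun : trigPoly a p q = a • (fun _ => (1 : ℝ)) + p • cos + q • sin := by
    funext x; simp [trigPoly]
  rw [hfun]
  refine add_mem (add_mem ?_ ?_) ?_ <;>
    exact Submodule.smul_mem _ _ (Submodule.subset_span (by simp))

theorem hasDerivAt_trigPoly (a p q x : ℝ) :
    HasDerivAt (trigPoly a p q) (trigPoly 0 q (-p) x) x := by
  refine (((hasDerivAt_cos x).const_mul p).const_add a).add ((hasDerivAt_sin x).const_mul q)
    |>.congr_deriv ?_
  simp only [trigPoly]
  ring

theorem deriv_trigPoly (a p q : ℝ) : deriv (trigPoly a p q) = trigPoly 0 q (-p) :=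
  funext fun x => (hasDerivAt_trigPoly a p q x).deriv

theorem cos_ne_one_of_pos_of_lt_two_pi {b : ℝ} (hb0 : 0 < b) (hb2 : b < 2 * π) : cos b ≠ 1 :=
  fun h => hb0.ne' ((cos_eq_one_iff_of_lt_of_lt (by linarith) hb2).mp h)

theorem cos_sub_sin_div_one_sub_cos_mul_sin {b : ℝ} (hb : cos b ≠ 1) :
    cos b - sin b / (1 - cos b) * sin b = -1 := by
  have : 1 - cos b ≠ 0 := sub_ne_zero.mpr hb.symm
  field_simp
  nlinarith [sin_sq_add_cos_sq b]

theorem sin_two_mul_sub_eq_div {u v : ℝ} (hv : sin v ≠ 0) :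
    sin (2 * u) - sin (2 * v) / (1 - cos (2 * v)) * (1 - cos (2 * u))
      = 2 * sin u * sin (v - u) / sin v := by
  rw [sin_two_mul, sin_two_mul, cos_two_mul, cos_two_mul, cos_sq', cos_sq', sin_sub,
    eq_div_iff hv]
  have : 1 - (2 * (1 - sin v ^ 2) - 1) = 2 * sin v ^ 2 := by ring
  rw [this]
  field_simp
  ring

theorem sin_sub_sin_div_one_sub_cos_mul_nonneg {b x : ℝ} (hb0 : 0 < b) (hb2 : b < 2 * π)
    (hx : x ∈ Icc 0 b) : 0 ≤ sin x - sin b / (1 - cos b) * (1 - cos x) := by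
  have hsin : 0 < sin (b / 2) := sin_pos_of_pos_of_lt_pi (by linarith) (by linarith)
  have hfactor := sin_two_mul_sub_eq_div (u := x / 2) hsin.ne'
  rw [mul_div_cancel₀ _ two_ne_zero, mul_div_cancel₀ _ two_ne_zero] at hfactor
  rw [hfactor]
  have h1 : 0 ≤ sin (x / 2) :=
    sin_nonneg_of_nonneg_of_le_pi (by linarith [hx.1]) (by linarith [hx.2])
  have h2 : 0 ≤ sin (b / 2 - x / 2) :=
    sin_nonneg_of_nonneg_of_le_pi (by linarith [hx.2]) (by linarith [hx.1])
  positivity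

theorem trig_bernstein_basis_general
    (b : ℝ) (hb0 : 0 < b) (hb2 : b < 2 * π) :
    let p22 : ℝ → ℝ := fun x => 1 - Real.cos x
    let p21 : ℝ → ℝ := fun x => Real.sin x - (Real.sin b / (1 - Real.cos b)) * (1 - Real.cos x)
    let p20 : ℝ → ℝ := fun x => 1 - Real.cos (x - b)
    (p22 ∈ Submodule.span ℝ ({fun _ => (1 : ℝ), Real.cos, Real.sin} : Set (ℝ → ℝ))) ∧
    (p21 ∈ Submodule.span ℝ ({fun _ => (1 : ℝ), Real.cos, Real.sin} : Set (ℝ → ℝ))) ∧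
    (p20 ∈ Submodule.span ℝ ({fun _ => (1 : ℝ), Real.cos, Real.sin} : Set (ℝ → ℝ))) ∧
    ZeroOfOrder p22 0 2 ∧ ZeroOfOrder p22 b 0 ∧
    ZeroOfOrder p21 0 1 ∧ ZeroOfOrder p21 b 1 ∧
    ZeroOfOrder p20 0 0 ∧ ZeroOfOrder p20 b 2 ∧
    deriv p21 b = -1 ∧ deriv p21 0 = 1 ∧
    ∃ δ > 0, ∀ x ∈ Ico 0 δ ∪ Ioc (b - δ) b,
      0 ≤ p22 x ∧ 0 ≤ p21 x ∧ 0 ≤ p20 x := by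
  intro p22 p21 p20
  set c := sin b / (1 - cos b)
  have hcos : cos b ≠ 1 := cos_ne_one_of_pos_of_lt_two_pi hb0 hb2
  have hc : c * (1 - cos b) = sin b := div_mul_cancel₀ _ (sub_ne_zero.mpr hcos.symm)
  have hc' : cos b - c * sin b = -1 := cos_sub_sin_div_one_sub_cos_mul_sin hcos
  have h22 : p22 = trigPoly 1 (-1) 0 := by funext x; simp [p22, trigPoly]; ring
  have h21 : p21 = trigPoly (-c) c 1 := by funext x; simp [p21, trigPoly]; ring
  have h20 : p20 = trigPoly 1 (-cos b) (-sin b) := by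
    funext x; simp [p20, trigPoly, cos_sub]; ring
  have hnonneg : ∀ x ∈ Icc 0 b, 0 ≤ p22 x ∧ 0 ≤ p21 x ∧ 0 ≤ p20 x := fun x hx =>
    ⟨sub_nonneg.mpr (cos_le_one x), sin_sub_sin_div_one_sub_cos_mul_nonneg hb0 hb2 hx,
      sub_nonneg.mpr (cos_le_one _)⟩
  have hIcc : Ico 0 b ∪ Ioc (b - b) b ⊆ Icc 0 b :=
    union_subset Ico_subset_Icc_self (sub_self b ▸ Ioc_subset_Icc_self)
  have hpyth := sin_sq_add_cos_sq b
  refine ⟨h22 ▸ trigPoly_mem_span _ _ _, h21 ▸ trigPoly_mem_span _ _ _,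
    h20 ▸ trigPoly_mem_span _ _ _, ?_, ?_, ?_, ?_, ?_, ?_, ?_, ?_,
    ⟨b, hb0, fun x hx => hnonneg x (hIcc hx)⟩⟩
  all_goals
    simp only [h22, h21, h20, zeroOfOrder_zero_iff, zeroOfOrder_one_iff, zeroOfOrder_two_iff,
      deriv_trigPoly, trigPoly, cos_zero, sin_zero]
  · norm_num
  · contrapose! hcos; linarith
  · norm_num
  · exact ⟨by linarith, by linarith⟩
  · contrapose! hcos; linarith
  · exact ⟨by linarith, by ring, by linarith⟩
  · linarith
  · ring

/-- For `0 < b < 2π`, `b ≠ π`, the functions `p_{2,2} = 1 - cos x`,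
`p_{2,1} = sin x - (sin b/(1-cos b))(1-cos x)`, `p_{2,0} = 1 - cos(x-b)` form a Bernstein
basis of `span{1, cos, sin}` for `{0,b}`: `p_{2,k}` has a zero of order exactly `k` at `0`
and exactly `2-k` at `b`; moreover `p_{2,1}'(b) = -1 < 0` and `p_{2,1}'(0) = 1 > 0`, and the
basis is locally non-negative at `{0,b}`. -/
theorem trig_bernstein_basis
    (b : ℝ) (hb0 : 0 < b) (hb2 : b < 2 * π) (hbπ : b ≠ π) :
    let p22 : ℝ → ℝ := fun x => 1 - Real.cos x
    let p21 : ℝ → ℝ := fun x => Real.sin x - (Real.sin b / (1 - Real.cos b)) * (1 - Real.cos x)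
    let p20 : ℝ → ℝ := fun x => 1 - Real.cos (x - b)
    (p22 ∈ Submodule.span ℝ ({fun _ => (1 : ℝ), Real.cos, Real.sin} : Set (ℝ → ℝ))) ∧
    (p21 ∈ Submodule.span ℝ ({fun _ => (1 : ℝ), Real.cos, Real.sin} : Set (ℝ → ℝ))) ∧
    (p20 ∈ Submodule.span ℝ ({fun _ => (1 : ℝ), Real.cos, Real.sin} : Set (ℝ → ℝ))) ∧
    ZeroOfOrder p22 0 2 ∧ ZeroOfOrder p22 b 0 ∧
    ZeroOfOrder p21 0 1 ∧ ZeroOfOrder p21 b 1 ∧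
    ZeroOfOrder p20 0 0 ∧ ZeroOfOrder p20 b 2 ∧
    deriv p21 b = -1 ∧ deriv p21 0 = 1 ∧
    ∃ δ > 0, ∀ x ∈ Ico 0 δ ∪ Ioc (b - δ) b,
      0 ≤ p22 x ∧ 0 ≤ p21 x ∧ 0 ≤ p20 x :=
  trig_bernstein_basis_general b hb0 hb2
end

section
/- Let n ≥ 2, let p_{n,k} be a locally non-negative Bernstein basis of U_n at {a,b}, and let f_0 = Σ β_k p_{n,k}, f_1 = Σ γ_k p_{n,k} with f_0(b) > 0 and β_n, β_{n-1}, β_{n-2} > 0. Then the inequality γ_{n-2}/β_{n-2} ≤ γ_n/β_n holds if and only if [f_0(b) f_1''(b) - f_0''(b) f_1(b)] p_{n,n-1}'(b) - [f_0(b) f_1'(b) - f_0'(b) f_1(b)] p_{n,n-1}''(b) ≥ 0. -/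
open Set Finset

private lemma deriv_sum_mul (n : ℕ) (c : ℕ → ℝ) (q : ℕ → ℝ → ℝ)
    (hq : ∀ k ≤ n, Differentiable ℝ (q k)) :
    deriv (fun x => ∑ k ∈ Finset.range (n + 1), c k * q k x)
      = fun x => ∑ k ∈ Finset.range (n + 1), c k * deriv (q k) x := by
  funext x
  rw [deriv_fun_sum (fun k hk =>
    ((hq k (Nat.lt_succ_iff.mp (Finset.mem_range.mp hk))).differentiableAt).const_mul _)]
  exact Finset.sum_congr rfl fun k hk =>
    deriv_const_mul _ ((hq k (Nat.lt_succ_iff.mp (Finset.mem_range.mp hk))).differentiableAt)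

private lemma sum_last3 (m : ℕ) (c v : ℕ → ℝ) (hv : ∀ k < m, v k = 0) :
    ∑ k ∈ Finset.range (m + 2 + 1), c k * v k
      = c m * v m + c (m + 1) * v (m + 1) + c (m + 2) * v (m + 2) := by
  rw [Finset.sum_range_succ, Finset.sum_range_succ, Finset.sum_range_succ,
    Finset.sum_eq_zero (fun k hk => by rw [hv k (Finset.mem_range.mp hk), mul_zero])]
  ring

/-- The criterion (eqcrit): with a locally non-negative Bernstein basis at `{a,b}` (so that
`p_{n,n-1}'(b) < 0`, `p_{n,n-2}''(b) > 0`, `p_{n,n}(b) > 0`), `f₀(b) > 0` and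
`β_n, β_{n-1}, β_{n-2} > 0`, the inequality `γ_{n-2}/β_{n-2} ≤ γ_n/β_n` holds if and only if
`[f₀(b) f₁''(b) - f₀''(b) f₁(b)] p_{n,n-1}'(b) - [f₀(b) f₁'(b) - f₀'(b) f₁(b)] p_{n,n-1}''(b) ≥ 0`. -/
theorem eqcrit_iff
    (n : ℕ) (hn : 2 ≤ n) (a b : ℝ) (hab : a < b)
    (p : ℕ → ℝ → ℝ) (β γ : ℕ → ℝ) (f₀ f₁ : ℝ → ℝ)
    (hpsmooth : ∀ k ≤ n, ContDiff ℝ 2 (p k))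
    (hpnb : 0 < p n b)
    (hpn1 : p (n - 1) b = 0) (hpn1' : deriv (p (n - 1)) b < 0)
    (hpn2 : p (n - 2) b = 0) (hpn2' : deriv (p (n - 2)) b = 0)
    (hpn2'' : 0 < deriv (deriv (p (n - 2))) b)
    (hlow : ∀ k < n - 2, p k b = 0 ∧ deriv (p k) b = 0 ∧ deriv (deriv (p k)) b = 0)
    (hf₀ : f₀ = fun x => ∑ k ∈ Finset.range (n + 1), β k * p k x)
    (hf₁ : f₁ = fun x => ∑ k ∈ Finset.range (n + 1), γ k * p k x)
    (hf₀b : 0 < f₀ b)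
    (hβn : 0 < β n) (hβn1 : 0 < β (n - 1)) (hβn2 : 0 < β (n - 2)) :
    γ (n - 2) / β (n - 2) ≤ γ n / β n ↔
      0 ≤ (f₀ b * deriv (deriv f₁) b - deriv (deriv f₀) b * f₁ b) * deriv (p (n - 1)) b
        - (f₀ b * deriv f₁ b - deriv f₀ b * f₁ b) * deriv (deriv (p (n - 1))) b := by
  obtain ⟨m, rfl⟩ : ∃ m, n = m + 2 := ⟨n - 2, by omega⟩
  simp only [show m + 2 - 1 = m + 1 from rfl, show m + 2 - 2 = m from rfl]
    at hpn1 hpn1' hpn2 hpn2' hpn2'' hlow hβn1 hβn2 ⊢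
  -- differentiability
  have hd1 : ∀ k ≤ m + 2, Differentiable ℝ (p k) := fun k hk =>
    (hpsmooth k hk).differentiable (by norm_num)
  have hd2 : ∀ k ≤ m + 2, Differentiable ℝ (deriv (p k)) := by
    intro k hk
    have h2 : ContDiff ℝ ((1 : ℕ) + 1) (p k) := by exact_mod_cast hpsmooth k hk
    exact ((contDiff_succ_iff_deriv.mp h2).2.2).differentiable (by norm_num)
  have df₀ : deriv f₀ = fun x => ∑ k ∈ Finset.range (m + 2 + 1), β k * deriv (p k) x := by
    rw [hf₀]; exact deriv_sum_mul (m + 2) β p hd1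
  have df₁ : deriv f₁ = fun x => ∑ k ∈ Finset.range (m + 2 + 1), γ k * deriv (p k) x := by
    rw [hf₁]; exact deriv_sum_mul (m + 2) γ p hd1
  have ddf₀ : deriv (deriv f₀)
      = fun x => ∑ k ∈ Finset.range (m + 2 + 1), β k * deriv (deriv (p k)) x := by
    rw [df₀]; exact deriv_sum_mul (m + 2) β (fun k => deriv (p k)) hd2
  have ddf₁ : deriv (deriv f₁)
      = fun x => ∑ k ∈ Finset.range (m + 2 + 1), γ k * deriv (deriv (p k)) x := by
    rw [df₁]; exact deriv_sum_mul (m + 2) γ (fun k => deriv (p k)) hd2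
  -- evaluate at b
  have hv0 : f₀ b = β (m + 2) * p (m + 2) b := by
    simp only [hf₀]
    rw [sum_last3 m β (fun k => p k b) (fun k hk => (hlow k hk).1), hpn2, hpn1]
    ring
  have hv1 : f₁ b = γ (m + 2) * p (m + 2) b := by
    simp only [hf₁]
    rw [sum_last3 m γ (fun k => p k b) (fun k hk => (hlow k hk).1), hpn2, hpn1]
    ring
  have hd₀ : deriv f₀ b = β (m + 1) * deriv (p (m + 1)) b + β (m + 2) * deriv (p (m + 2)) b := by
    simp only [df₀]
    rw [sum_last3 m β (fun k => deriv (p k) b) (fun k hk => (hlow k hk).2.1), hpn2']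
    ring
  have hd₁ : deriv f₁ b = γ (m + 1) * deriv (p (m + 1)) b + γ (m + 2) * deriv (p (m + 2)) b := by
    simp only [df₁]
    rw [sum_last3 m γ (fun k => deriv (p k) b) (fun k hk => (hlow k hk).2.1), hpn2']
    ring
  have hdd₀ : deriv (deriv f₀) b = β m * deriv (deriv (p m)) b
      + β (m + 1) * deriv (deriv (p (m + 1))) b + β (m + 2) * deriv (deriv (p (m + 2))) b := by
    simp only [ddf₀]
    exact sum_last3 m β (fun k => deriv (deriv (p k)) b) (fun k hk => (hlow k hk).2.2)
  have hdd₁ : deriv (deriv f₁) b = γ m * deriv (deriv (p m)) b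
      + γ (m + 1) * deriv (deriv (p (m + 1))) b + γ (m + 2) * deriv (deriv (p (m + 2))) b := by
    simp only [ddf₁]
    exact sum_last3 m γ (fun k => deriv (deriv (p k)) b) (fun k hk => (hlow k hk).2.2)
  rw [hv0, hv1, hd₀, hd₁, hdd₀, hdd₁]
  have key : (β (m + 2) * p (m + 2) b *
        (γ m * deriv (deriv (p m)) b + γ (m + 1) * deriv (deriv (p (m + 1))) b +
          γ (m + 2) * deriv (deriv (p (m + 2))) b) -
      (β m * deriv (deriv (p m)) b + β (m + 1) * deriv (deriv (p (m + 1))) b +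
          β (m + 2) * deriv (deriv (p (m + 2))) b) * (γ (m + 2) * p (m + 2) b)) *
      deriv (p (m + 1)) b -
    (β (m + 2) * p (m + 2) b *
        (γ (m + 1) * deriv (p (m + 1)) b + γ (m + 2) * deriv (p (m + 2)) b) -
      (β (m + 1) * deriv (p (m + 1)) b + β (m + 2) * deriv (p (m + 2)) b) *
        (γ (m + 2) * p (m + 2) b)) * deriv (deriv (p (m + 1))) b
    = (γ m * β (m + 2) - β m * γ (m + 2)) *
        (p (m + 2) b * deriv (deriv (p m)) b * deriv (p (m + 1)) b) := by ring
  rw [key, div_le_div_iff₀ hβn2 hβn]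
  have hcneg : p (m + 2) b * deriv (deriv (p m)) b * deriv (p (m + 1)) b < 0 :=
    mul_neg_of_pos_of_neg (mul_pos hpnb hpn2'') hpn1'
  constructor
  · intro h; nlinarith
  · intro h; nlinarith
end

section
/- For every b ∈ [7π/4, 2π), the quantity h(b) := (cos b)(-(sin b - b)^2 + (cos b - 1 + b²/2)(1 - cos b)) - (1 + sin b)((sin b - b)(1 - cos b) + (cos b - 1 + b²/2) sin b) satisfies h(b) < b - b²/2 < 0. In particular h(b) < 0, so the inequality criterion (eqcrit) fails for f_0 = 1 and f_1 = 1 + x - cos x with the Bernstein basis of span{1, x, x², cos x, sin x} on [0,b]. -/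
open Real

/-- For every `b ∈ [7π/4, 2π)`, the quantity
`h(b) = cos b (-(sin b - b)² + (cos b - 1 + b²/2)(1 - cos b))
        - (1 + sin b)((sin b - b)(1 - cos b) + (cos b - 1 + b²/2) sin b)`
satisfies `h(b) < b - b²/2 < 0`; in particular `h(b) < 0`. -/
theorem counterexample_h_neg
    (b : ℝ) (hb1 : 7 * π / 4 ≤ b) (hb2 : b < 2 * π) :
    Real.cos b * (-(Real.sin b - b) ^ 2
        + (Real.cos b - 1 + b ^ 2 / 2) * (1 - Real.cos b))
      - (1 + Real.sin b) * ((Real.sin b - b) * (1 - Real.cos b)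
        + (Real.cos b - 1 + b ^ 2 / 2) * Real.sin b)
      < b - b ^ 2 / 2 ∧ b - b ^ 2 / 2 < 0 := by
  have hπ := Real.pi_gt_d6
  have hbb : (2 : ℝ) < b := by nlinarith
  have hc : 0 < Real.cos b := by
    rw [← Real.cos_sub_two_pi]
    apply Real.cos_pos_of_mem_Ioo
    constructor <;> [nlinarith; nlinarith]
  have hs : Real.sin b < 0 := by
    rw [← Real.sin_sub_two_pi]
    apply Real.sin_neg_of_neg_of_neg_pi_lt <;> nlinarith
  have hcs : 0 ≤ Real.cos b + Real.sin b := by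
    have h1 : 0 ≤ Real.sin (b + π / 4 - 2 * π) :=
      Real.sin_nonneg_of_nonneg_of_le_pi (by nlinarith) (by nlinarith)
    rw [Real.sin_sub_two_pi, Real.sin_add, Real.cos_pi_div_four,
      Real.sin_pi_div_four] at h1
    nlinarith [Real.sq_sqrt (by norm_num : (2:ℝ) ≥ 0),
      Real.sqrt_pos.mpr (by norm_num : (0:ℝ) < 2)]
  have hc1 : Real.cos b ≤ 1 := Real.cos_le_one b
  have hpyth := Real.sin_sq_add_cos_sq b
  constructor
  · nlinarith [mul_pos (by nlinarith : (0:ℝ) < b) hc,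
      mul_nonpos_of_nonpos_of_nonneg (by nlinarith : b * Real.sin b ≤ 0)
        (by nlinarith : (0:ℝ) ≤ Real.cos b + 1),
      mul_nonneg (mul_nonneg (by nlinarith : (0:ℝ) ≤ b) (by nlinarith : (0:ℝ) ≤ b)) hcs,
      mul_nonneg hc.le (by nlinarith : (0:ℝ) ≤ 1 - Real.cos b)]
  · nlinarith
end
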